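/- arXiv:1603.05037 — 8 statements merged into one kernel-verified Lean document; each statement's English description precedes it below -/
import Mathlib

section
/- If a Littlewood–Richardson n-hive has λ_n = 0 (i.e. a(n,n) = a(n−1,n−1)), then μ_n = 0, ν_n = 0, and every upright rhombus gradient U_{in} in the n-th diagonal vanishes; in fact all edge labels in the n-th diagonal are 0, i.e. a(i,n) = a(i,n−1) and a(i,n) = a(i−1,n) appropriately, so that the restriction of a to pairs (i,j) with j ≤ n−1 is an LR (n−1)-hive with the same λ_1,…,λ_{n−1}, μ_1,…,μ_{n−1}, ν_1,…,ν_{n−1}. -/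
/-- A Littlewood–Richardson `n`-hive: integer vertex labels with `a 0 0 = 0`, the upright,
right-leaning and left-leaning rhombus inequalities, and nonnegative edge labels. -/
def IsLRHive (n : ℕ) (a : ℕ → ℕ → ℤ) : Prop :=
  a 0 0 = 0 ∧
  (∀ i j : ℕ, 1 ≤ i → i < j → j ≤ n →
    a i (j - 1) + a (i - 1) j ≤ a i j + a (i - 1) (j - 1) ∧
    a (i - 1) (j - 2) + a i j ≤ a (i - 1) (j - 1) + a i (j - 1) ∧
    a (i - 1) (j - 1) + a (i + 1) j ≤ a i (j - 1) + a i j) ∧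
  (∀ i j : ℕ, i < j → j ≤ n → a i (j - 1) ≤ a i j) ∧
  (∀ i j : ℕ, 1 ≤ i → i ≤ j → j ≤ n → a (i - 1) j ≤ a i j)

/-- If an LR `n`-hive has `λ_n = 0` then `μ_n = 0`, `ν_n = 0`, every upright gradient
`U_{in}` in the `n`-th diagonal vanishes, in fact all edge labels in the `n`-th diagonal
are `0`, and the restriction to `j ≤ n - 1` is an LR `(n-1)`-hive with the same
`λ_1, …, λ_{n-1}`, `μ_1, …, μ_{n-1}`, `ν_1, …, ν_{n-1}`. -/
theorem LRHive_empty_last_diagonal (n : ℕ) (a : ℕ → ℕ → ℤ) (hn : 1 ≤ n)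
    (h : IsLRHive n a) (hlam : a n n = a (n - 1) (n - 1)) :
    a 0 n = a 0 (n - 1) ∧
    a n n = a (n - 1) n ∧
    (∀ i : ℕ, 1 ≤ i → i < n →
      (a i n - a i (n - 1)) - (a (i - 1) n - a (i - 1) (n - 1)) = 0) ∧
    (∀ i : ℕ, i < n → a i n = a i (n - 1)) ∧
    (∀ k : ℕ, 1 ≤ k → k < n →
      a k (n - 1) - a (k - 1) (n - 1) = a k n - a (k - 1) n) ∧
    IsLRHive (n - 1) a := by
  obtain ⟨h0, hrh, he1, he2⟩ := h
  have hA : a (n - 1) (n - 1) ≤ a (n - 1) n := he1 (n - 1) n (by omega) le_rfl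
  have hB : a (n - 1) n ≤ a n n := he2 n n hn le_rfl le_rfl
  have hlast : a (n - 1) n = a (n - 1) (n - 1) := by linarith [hlam.le, hlam.ge]
  have key : ∀ d : ℕ, d < n → a (n - 1 - d) n = a (n - 1 - d) (n - 1) := by
    intro d
    induction d with
    | zero => intro _; exact hlast
    | succ d ih =>
      intro hd
      have ih' := ih (by omega)
      have hi : (1 : ℕ) ≤ n - 1 - d := by omega
      have hur := (hrh (n - 1 - d) n hi (by omega) le_rfl).1
      have hle := he1 (n - 1 - d - 1) n (by omega) le_rfl
      have heq : n - 1 - d - 1 = n - 1 - (d + 1) := by omega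
      rw [heq] at hur hle
      linarith
  have key' : ∀ i : ℕ, i < n → a i n = a i (n - 1) := by
    intro i hi
    have : n - 1 - (n - 1 - i) = i := by omega
    have := key (n - 1 - i) (by omega)
    rwa [show n - 1 - (n - 1 - i) = i from by omega] at this
  refine ⟨key' 0 hn, ?_, ?_, key', ?_, ?_⟩
  · linarith [hlast]
  · intro i h1 h2
    rw [key' i h2, key' (i - 1) (by omega)]; ring
  · intro k h1 h2
    rw [key' k h2, key' (k - 1) (by omega)]
  · exact ⟨h0,
      fun i j hi hij hj => hrh i j hi hij (by omega),
      fun i j hij hj => he1 i j hij (by omega),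
      fun i j hi hij hj => he2 i j hi hij (by omega)⟩
end

section
/- Let T be a semistandard skew tableau of shape λ/μ and let (r, λ_r) be a corner cell of λ with 0 < T(r,λ_r) < r (where empty cells inside μ are treated as containing 0). Then the Sagan–Stanley type deletion starting at (r,λ_r) — which removes the corner cell, and repeatedly bumps the removed entry into the rightmost cell of the row above containing a strictly smaller entry, terminating when an empty cell (entry 0) at a corner of μ is filled — produces a tableau that is again semistandard, of shape λ'/μ' where λ' = λ − ε_r and μ' = μ − ε_t for the terminating row t. -/
/-- `f` is a partition given as a weakly decreasing function on positive indices. -/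
def IsPartitionFun (f : ℕ → ℕ) : Prop := ∀ r : ℕ, 1 ≤ r → f (r + 1) ≤ f r

/-- Rows weakly increase; the tableau is extended by `0` on the cells of the inner shape. -/
def RowWeak (lam : ℕ → ℕ) (T : ℕ → ℕ → ℕ) : Prop :=
  ∀ r c : ℕ, 1 ≤ r → 1 ≤ c → c < lam r → T r c ≤ T r (c + 1)

/-- Columns strictly increase on the skew cells. -/
def ColStrict (lam mu : ℕ → ℕ) (T : ℕ → ℕ → ℕ) : Prop :=
  ∀ r c : ℕ, 1 ≤ r → mu r < c → c ≤ lam (r + 1) → T r c < T (r + 1) c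

/-- A cell of the outer shape carries the entry `0` exactly when it lies in the inner
shape (the zero-extension convention for skew tableaux). -/
def ZeroIffInner (lam mu : ℕ → ℕ) (T : ℕ → ℕ → ℕ) : Prop :=
  ∀ r c : ℕ, 1 ≤ r → 1 ≤ c → c ≤ lam r → (T r c = 0 ↔ c ≤ mu r)

/-- The number of cells in row `r` of the skew shape `lam/mu` carrying the entry `s`. -/
def RowCount (lam mu : ℕ → ℕ) (T : ℕ → ℕ → ℕ) (s r : ℕ) : ℕ :=
  ((Finset.Ioc (mu r) (lam r)).filter (fun c => T r c = s)).card

/-- The lattice permutation property. -/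
def LatticeProp (lam mu : ℕ → ℕ) (T : ℕ → ℕ → ℕ) : Prop :=
  ∀ r s : ℕ, 1 ≤ r → 2 ≤ s →
    ∑ r' ∈ Finset.Icc 1 r, RowCount lam mu T s r' ≤
      ∑ r' ∈ Finset.Icc 1 (r - 1), RowCount lam mu T (s - 1) r'

/-- A Sagan–Stanley type deletion path for the deletion starting at the corner
`(r, lam r)` and terminating in row `t`: `p k` is the column of the path in row `k`;
in each row the bumped entry replaces the rightmost strictly smaller entry, and the
process stops when an empty cell (entry `0`) is reached. -/
def DeletionPath (lam : ℕ → ℕ) (T : ℕ → ℕ → ℕ) (r t : ℕ) (p : ℕ → ℕ) : Prop :=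
  p r = lam r ∧
  (∀ k : ℕ, t ≤ k → k < r →
    1 ≤ p k ∧ p k ≤ lam k ∧ T k (p k) < T (k + 1) (p (k + 1)) ∧
    ∀ c : ℕ, p k < c → c ≤ lam k → T (k + 1) (p (k + 1)) ≤ T k c) ∧
  T t (p t) = 0 ∧ (∀ k : ℕ, t < k → k ≤ r → 0 < T k (p k))

/-- The tableau obtained by performing the deletion along the path `p`. -/
def DeleteResult (T : ℕ → ℕ → ℕ) (r t : ℕ) (p : ℕ → ℕ) : ℕ → ℕ → ℕ :=
  fun k c => if t ≤ k ∧ k < r ∧ c = p k then T (k + 1) (p (k + 1)) else T k c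

/-- The sequence `f - ε_m`: decrease the value of `f` at `m` by one. -/
def decAt (f : ℕ → ℕ) (m : ℕ) : ℕ → ℕ := fun k => if k = m then f m - 1 else f k

/-- Let `T` be a semistandard skew tableau of shape `lam/mu` (zero-extended on the inner
shape) and `(r, lam r)` a corner of `lam` with `0 < T r (lam r) < r`.  Then the
Sagan–Stanley type deletion starting at `(r, lam r)` produces a tableau that is again
semistandard, of shape `(lam - ε_r)/(mu - ε_t)` where `t` is the terminating row;
moreover the terminating cell is the corner `(t, mu t)` of the inner shape. -/
theorem deletion_preserves_semistandard (lam mu : ℕ → ℕ) (T : ℕ → ℕ → ℕ)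
    (r t : ℕ) (p : ℕ → ℕ)
    (hlam : IsPartitionFun lam) (hmu : IsPartitionFun mu)
    (hsub : ∀ k : ℕ, 1 ≤ k → mu k ≤ lam k)
    (hzero : ZeroIffInner lam mu T)
    (hrow : RowWeak lam T) (hcol : ColStrict lam mu T)
    (hr : 1 ≤ r) (hcell : 1 ≤ lam r) (hcorner : lam (r + 1) < lam r)
    (hpos : 0 < T r (lam r)) (hlt : T r (lam r) < r)
    (ht : 1 ≤ t) (htr : t < r)
    (hpath : DeletionPath lam T r t p) :
    p t = mu t ∧ 1 ≤ mu t ∧ mu (t + 1) < mu t ∧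
    ZeroIffInner (decAt lam r) (decAt mu t) (DeleteResult T r t p) ∧
    RowWeak (decAt lam r) (DeleteResult T r t p) ∧
    ColStrict (decAt lam r) (decAt mu t) (DeleteResult T r t p) := by
  obtain ⟨hpr, hstep, hpt0, hppos⟩ := hpath
  have hple : ∀ k, t ≤ k → k ≤ r → 1 ≤ p k ∧ p k ≤ lam k := by
    intro k h1 h2
    rcases eq_or_lt_of_le h2 with h | h
    · subst h; exact ⟨by omega, by omega⟩
    · exact ⟨(hstep k h1 h).1, (hstep k h1 h).2.1⟩
  have hrowle : ∀ k c c', 1 ≤ k → 1 ≤ c → c ≤ c' → c' ≤ lam k → T k c ≤ T k c' := by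
    intro k c c' hk hc hcc'
    induction c', hcc' using Nat.le_induction with
    | base => intro _; exact le_rfl
    | succ n hn ih =>
      intro hcl
      exact le_trans (ih (by omega)) (hrow k n hk (by omega) (by omega))
  have hmono : ∀ k, t ≤ k → k < r → p (k + 1) ≤ p k := by
    intro k hk1 hk2
    by_contra h
    push_neg at h
    obtain ⟨hpk1, hpk2, hlt', hmax⟩ := hstep k hk1 hk2
    have hk0 : 1 ≤ k := le_trans ht hk1
    have h1 : p (k + 1) ≤ lam (k + 1) := (hple (k + 1) (by omega) (by omega)).2
    have h1' : 1 ≤ p (k + 1) := (hple (k + 1) (by omega) (by omega)).1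
    have h2 : p (k + 1) ≤ lam k := le_trans h1 (hlam k hk0)
    have h3 := hmax (p (k + 1)) h h2
    have hpos' : 0 < T (k + 1) (p (k + 1)) := hppos (k + 1) (by omega) (by omega)
    by_cases hc : p (k + 1) ≤ mu k
    · have := (hzero k (p (k + 1)) hk0 h1' h2).mpr hc
      omega
    · push_neg at hc
      have := hcol k (p (k + 1)) hk0 hc h1
      omega
  have hpt1 := hple t le_rfl htr.le
  have hle : p t ≤ mu t := (hzero t (p t) ht hpt1.1 hpt1.2).mp hpt0
  have h1mu : 1 ≤ mu t := le_trans hpt1.1 hle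
  have hge : mu t ≤ p t := by
    by_contra hcon
    push_neg at hcon
    have hmax := (hstep t le_rfl htr).2.2.2
    have h3 := hmax (mu t) hcon (hsub t ht)
    have h0 : T t (mu t) = 0 := (hzero t (mu t) ht h1mu (hsub t ht)).mpr le_rfl
    have := hppos (t + 1) (by omega) (by omega)
    omega
  have hpt : p t = mu t := le_antisymm hle hge
  have hmuk : ∀ k, t < k → k ≤ r → mu k < p k := by
    intro k h1 h2
    have h3 := hple k (by omega) h2
    have h4 := hppos k h1 h2
    by_contra h
    push_neg at h
    have := (hzero k (p k) (by omega) h3.1 h3.2).mpr h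
    omega
  have hcorn : mu (t + 1) < mu t := by
    have h1 := hmono t le_rfl htr
    have h2 := hmuk (t + 1) (by omega) (by omega)
    omega
  refine ⟨hpt, h1mu, hcorn, ?_, ?_, ?_⟩
  · -- ZeroIffInner
    intro k c hk hc hcl
    simp only [decAt] at hcl
    simp only [DeleteResult, decAt]
    by_cases hkr : k = r
    · subst hkr
      rw [if_pos rfl] at hcl
      rw [if_neg (by omega : ¬(t ≤ k ∧ k < k ∧ c = p k)), if_neg (by omega : ¬(k = t))]
      exact hzero k c hk hc (by omega)
    · rw [if_neg hkr] at hcl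
      by_cases hkt : k = t
      · subst hkt
        rw [if_pos rfl]
        by_cases hcp : c = p k
        · rw [if_pos ⟨le_rfl, htr, hcp⟩]
          have hpos' := hppos (k + 1) (by omega) (by omega)
          constructor
          · intro h; omega
          · intro h; omega
        · rw [if_neg (fun h => hcp h.2.2)]
          have h0 := hzero k c hk hc hcl
          constructor
          · intro h; have := h0.mp h; omega
          · intro h; exact h0.mpr (by omega)
      · rw [if_neg hkt]
        by_cases hin : t ≤ k ∧ k < r ∧ c = p k
        · rw [if_pos hin]
          have hpos' := hppos (k + 1) (by omega) (by omega)
          have hmx := hmuk k (by omega) (by omega)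
          constructor
          · intro h; omega
          · intro h; omega
        · rw [if_neg hin]
          exact hzero k c hk hc hcl
  · -- RowWeak
    intro k c hk hc hcl
    simp only [decAt] at hcl
    simp only [DeleteResult]
    by_cases hkin : t ≤ k ∧ k < r
    · obtain ⟨hk1, hk2⟩ := hkin
      rw [if_neg (by omega : ¬(k = r))] at hcl
      obtain ⟨hpk1, hpk2, hlt', hmax⟩ := hstep k hk1 hk2
      by_cases h1 : c = p k
      · rw [if_pos ⟨hk1, hk2, h1⟩, if_neg (by omega : ¬(t ≤ k ∧ k < r ∧ c + 1 = p k))]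
        exact hmax (c + 1) (by omega) (by omega)
      · rw [if_neg (by omega : ¬(t ≤ k ∧ k < r ∧ c = p k))]
        by_cases h2 : c + 1 = p k
        · rw [if_pos ⟨hk1, hk2, h2⟩]
          have h3 := hrow k c hk hc hcl
          rw [h2] at h3
          omega
        · rw [if_neg (by omega : ¬(t ≤ k ∧ k < r ∧ c + 1 = p k))]
          exact hrow k c hk hc hcl
    · rw [if_neg (by omega : ¬(t ≤ k ∧ k < r ∧ c = p k)),
        if_neg (by omega : ¬(t ≤ k ∧ k < r ∧ c + 1 = p k))]
      by_cases hkr : k = r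
      · subst hkr
        rw [if_pos rfl] at hcl
        exact hrow k c hk hc (by omega)
      · rw [if_neg hkr] at hcl
        exact hrow k c hk hc hcl
  · -- ColStrict
    intro k c hk hcmu hcl
    simp only [decAt] at hcmu hcl
    simp only [DeleteResult]
    have hlamk : lam (k + 1) ≤ lam k := hlam k hk
    have hcl' : c ≤ lam (k + 1) := by
      rcases eq_or_ne (k + 1) r with h | h
      · rw [if_pos h] at hcl; rw [h]; omega
      · rwa [if_neg h] at hcl
    by_cases hkin : t ≤ k ∧ k < r
    · obtain ⟨hk1, hk2⟩ := hkin
      obtain ⟨hpk1, hpk2, hpkc, hpkmax⟩ := hstep k hk1 hk2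
      have hmono1 := hmono k hk1 hk2
      by_cases hc1 : c = p k
      · rw [if_pos ⟨hk1, hk2, hc1⟩]
        by_cases hc2 : t ≤ k + 1 ∧ k + 1 < r ∧ c = p (k + 1)
        · rw [if_pos hc2]
          exact (hstep (k + 1) hc2.1 hc2.2.1).2.2.1
        · rw [if_neg hc2]
          by_cases hkr : k + 1 = r
          · exfalso
            have hclr : c ≤ lam r - 1 := by rw [if_pos hkr] at hcl; exact hcl
            rw [hkr] at hmono1
            omega
          · have h4 := (hstep (k + 1) (by omega) (by omega)).2.2.2 c (by omega) hcl'
            have h5 := (hstep (k + 1) (by omega) (by omega)).2.2.1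
            omega
      · rw [if_neg (by omega : ¬(t ≤ k ∧ k < r ∧ c = p k))]
        by_cases hc2 : t ≤ k + 1 ∧ k + 1 < r ∧ c = p (k + 1)
        · rw [if_pos hc2]
          have hc0 : 1 ≤ p (k + 1) := (hple (k + 1) (by omega) (by omega)).1
          have h1 : T k c ≤ T k (p k) :=
            hrowle k c (p k) hk (by omega) (by omega) hpk2
          have h2 := (hstep (k + 1) hc2.1 hc2.2.1).2.2.1
          omega
        · rw [if_neg hc2]
          have hmuc : mu k < c := by
            rcases eq_or_ne k t with h | h
            · subst h
              rw [if_pos rfl] at hcmu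
              omega
            · rwa [if_neg h] at hcmu
          exact hcol k c hk hmuc hcl'
    · rw [if_neg (by omega : ¬(t ≤ k ∧ k < r ∧ c = p k))]
      have hkt : k ≠ t := by omega
      rw [if_neg hkt] at hcmu
      have hneg : ¬(t ≤ k + 1 ∧ k + 1 < r ∧ c = p (k + 1)) := by
        rintro ⟨h1, h2, h3⟩
        have hk1t : k + 1 = t := by omega
        have hmm := hmu k hk
        rw [hk1t] at hmm h3
        omega
      rw [if_neg hneg]
      exact hcol k c hk hcmu hcl'
end

section
/- Let T be a skew Littlewood–Richardson tableau of shape λ/μ (semistandard and lattice) and let (r,λ_r) be a corner cell of λ with 0 < T(r,λ_r) < r. Then the Sagan–Stanley type deletion starting at (r,λ_r) preserves the lattice permutation property: the resulting tableau of shape (λ−ε_r)/(μ−ε_t) (t the terminating row) again satisfies the lattice permutation property. -/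
lemma rowWeak_mono {lam : ℕ → ℕ} {T : ℕ → ℕ → ℕ} (hrow : RowWeak lam T)
    (k : ℕ) (hk : 1 ≤ k) : ∀ c c' : ℕ, 1 ≤ c → c ≤ c' → c' ≤ lam k → T k c ≤ T k c' := by
  intro c c' hc hcc' hc'
  induction c', hcc' using Nat.le_induction with
  | base => exact le_rfl
  | succ n hn ih =>
    exact le_trans (ih (by omega)) (hrow k n hk (by omega) (by omega))

lemma card_filter_point {S : Finset ℕ} {a : ℕ} (ha : a ∈ S) (f : ℕ → ℕ) (s : ℕ) :
    (S.filter (fun c => f c = s)).card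
      = ((S.erase a).filter (fun c => f c = s)).card + (if f a = s then 1 else 0) := by
  conv_lhs => rw [← Finset.insert_erase ha]
  rw [Finset.filter_insert]
  split
  · rw [Finset.card_insert_of_notMem (fun h =>
      Finset.notMem_erase a S (Finset.mem_filter.mp h).1)]
  · simp

lemma sum_Icc_split (f : ℕ → ℕ) (b : ℕ) (hb : 1 ≤ b) :
    ∑ k ∈ Finset.Icc 1 b, f k = (∑ k ∈ Finset.Icc 1 (b-1), f k) + f b := by
  obtain ⟨m, rfl⟩ : ∃ m, b = m + 1 := ⟨b - 1, by omega⟩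
  rw [Finset.sum_Icc_succ_top (by omega)]
  simp

/-- Let `T` be a skew Littlewood–Richardson tableau of shape `lam/mu` (semistandard and
lattice, zero-extended on the inner shape) and `(r, lam r)` a corner of `lam` with
`0 < T r (lam r) < r`.  Then the Sagan–Stanley type deletion starting at `(r, lam r)`
preserves the lattice permutation property: the resulting tableau of shape
`(lam - ε_r)/(mu - ε_t)` (with `t` the terminating row) again satisfies it. -/
theorem deletion_preserves_lattice (lam mu : ℕ → ℕ) (T : ℕ → ℕ → ℕ)
    (r t : ℕ) (p : ℕ → ℕ)
    (hlam : IsPartitionFun lam) (hmu : IsPartitionFun mu)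
    (hsub : ∀ k : ℕ, 1 ≤ k → mu k ≤ lam k)
    (hzero : ZeroIffInner lam mu T)
    (hrow : RowWeak lam T) (hcol : ColStrict lam mu T)
    (hlat : LatticeProp lam mu T)
    (hr : 1 ≤ r) (hcell : 1 ≤ lam r) (hcorner : lam (r + 1) < lam r)
    (hpos : 0 < T r (lam r)) (hlt : T r (lam r) < r)
    (ht : 1 ≤ t) (htr : t < r)
    (hpath : DeletionPath lam T r t p) :
    LatticeProp (decAt lam r) (decAt mu t) (DeleteResult T r t p) := by
  obtain ⟨hpr, hstep, hpt0, hppos⟩ := hpath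
  -- basic bounds on the path
  have hpkb : ∀ k, t ≤ k → k ≤ r → 1 ≤ p k ∧ p k ≤ lam k := by
    intro k h1 h2
    rcases eq_or_lt_of_le h2 with rfl | h
    · exact ⟨hpr ▸ hcell, le_of_eq hpr⟩
    · exact ⟨(hstep k h1 h).1, (hstep k h1 h).2.1⟩
  have hmupk : ∀ k, t < k → k ≤ r → mu k < p k := by
    intro k h1 h2
    by_contra h
    push_neg at h
    have hb := hpkb k (le_of_lt h1) h2
    have h0 := (hzero k (p k) (le_trans ht (le_of_lt h1)) hb.1 hb.2).mpr h
    have := hppos k h1 h2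
    omega
  have hpt : p t = mu t := by
    have hb := hpkb t le_rfl (le_of_lt htr)
    have h1 : p t ≤ mu t := (hzero t (p t) ht hb.1 hb.2).mp hpt0
    by_contra hne
    have hlt2 : p t < mu t := lt_of_le_of_ne h1 hne
    have h2 := (hstep t le_rfl htr).2.2.2 (mu t) hlt2 (hsub t ht)
    have h3 : T t (mu t) = 0 := (hzero t (mu t) ht (by omega) (hsub t ht)).mpr le_rfl
    have h4 := hppos (t+1) (by omega) (by omega)
    omega
  have hmut1 : 1 ≤ mu t := hpt ▸ (hpkb t le_rfl htr.le).1
  have hmurlam : mu r < lam r := by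
    by_contra h
    push_neg at h
    have := (hzero r (lam r) hr hcell le_rfl).mpr h
    omega
  -- rows outside [t, r] are unchanged
  have hsame : ∀ s k, k < t ∨ r < k →
      RowCount (decAt lam r) (decAt mu t) (DeleteResult T r t p) s k
        = RowCount lam mu T s k := by
    intro s k hk
    have h1 : decAt lam r k = lam k := by simp only [decAt]; rw [if_neg (by omega)]
    have h2 : decAt mu t k = mu k := by simp only [decAt]; rw [if_neg (by omega)]
    unfold RowCount
    rw [h1, h2]
    congr 1
    apply Finset.filter_congr
    intro c _
    simp only [DeleteResult]
    rw [if_neg (by omega)]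
  -- row t gains a cell with the entry bumped out of row t+1
  have hrowt : ∀ s : ℕ,
      RowCount (decAt lam r) (decAt mu t) (DeleteResult T r t p) s t
        = RowCount lam mu T s t + (if T (t+1) (p (t+1)) = s then 1 else 0) := by
    intro s
    have h1 : decAt lam r t = lam t := by simp only [decAt]; rw [if_neg (by omega)]
    have h2 : decAt mu t t = mu t - 1 := by simp [decAt]
    unfold RowCount
    rw [h1, h2]
    have hins : Finset.Ioc (mu t - 1) (lam t) = insert (mu t) (Finset.Ioc (mu t) (lam t)) := by
      ext c
      simp only [Finset.mem_Ioc, Finset.mem_insert]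
      have := hsub t ht
      omega
    have hrest : (Finset.Ioc (mu t) (lam t)).filter
          (fun c => DeleteResult T r t p t c = s)
        = (Finset.Ioc (mu t) (lam t)).filter (fun c => T t c = s) := by
      apply Finset.filter_congr
      intro c hc
      simp only [Finset.mem_Ioc] at hc
      simp only [DeleteResult]
      rw [if_neg (by rw [hpt]; omega)]
    have hval : DeleteResult T r t p t (mu t) = T (t+1) (p (t+1)) := by
      simp only [DeleteResult]
      rw [if_pos ⟨le_rfl, htr, hpt.symm⟩]
    rw [hins, Finset.filter_insert, hval]
    by_cases hcase : T (t+1) (p (t+1)) = s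
    · rw [if_pos hcase, if_pos hcase,
        Finset.card_insert_of_notMem (fun h => by
          have := (Finset.mem_Ioc.mp (Finset.mem_filter.mp h).1).1
          omega), hrest]
    · rw [if_neg hcase, if_neg hcase, hrest]
      simp
  -- middle rows: the path entry is replaced
  have hrowm : ∀ s k, t < k → k < r →
      RowCount (decAt lam r) (decAt mu t) (DeleteResult T r t p) s k
          + (if T k (p k) = s then 1 else 0)
        = RowCount lam mu T s k + (if T (k+1) (p (k+1)) = s then 1 else 0) := by
    intro s k h1 h2
    have hl : decAt lam r k = lam k := by simp only [decAt]; rw [if_neg (by omega)]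
    have hm : decAt mu t k = mu k := by simp only [decAt]; rw [if_neg (by omega)]
    unfold RowCount
    rw [hl, hm]
    have hmem : p k ∈ Finset.Ioc (mu k) (lam k) :=
      Finset.mem_Ioc.mpr ⟨hmupk k h1 h2.le, (hpkb k (by omega) h2.le).2⟩
    rw [card_filter_point hmem (DeleteResult T r t p k) s,
       card_filter_point hmem (T k) s]
    have hval : DeleteResult T r t p k (p k) = T (k+1) (p (k+1)) := by
      simp [DeleteResult, show t ≤ k from by omega, h2]
    have hrest : ((Finset.Ioc (mu k) (lam k)).erase (p k)).filter
          (fun c => DeleteResult T r t p k c = s)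
        = ((Finset.Ioc (mu k) (lam k)).erase (p k)).filter (fun c => T k c = s) := by
      apply Finset.filter_congr
      intro c hc
      have hne : c ≠ p k := Finset.ne_of_mem_erase hc
      simp only [DeleteResult]
      rw [if_neg (by tauto)]
    rw [hval, hrest]
    omega
  -- row r loses its last cell
  have hrowr : ∀ s : ℕ,
      RowCount (decAt lam r) (decAt mu t) (DeleteResult T r t p) s r
          + (if T r (lam r) = s then 1 else 0)
        = RowCount lam mu T s r := by
    intro s
    have hl : decAt lam r r = lam r - 1 := by simp [decAt]
    have hm : decAt mu t r = mu r := by simp only [decAt]; rw [if_neg (by omega)]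
    unfold RowCount
    rw [hl, hm]
    have hsameT : ∀ c, DeleteResult T r t p r c = T r c := by
      intro c
      simp only [DeleteResult]
      rw [if_neg (by omega)]
    have hins : Finset.Ioc (mu r) (lam r) = insert (lam r) (Finset.Ioc (mu r) (lam r - 1)) := by
      ext c
      simp only [Finset.mem_Ioc, Finset.mem_insert]
      omega
    rw [hins, Finset.filter_insert]
    have hrest : (Finset.Ioc (mu r) (lam r - 1)).filter
          (fun c => DeleteResult T r t p r c = s)
        = (Finset.Ioc (mu r) (lam r - 1)).filter (fun c => T r c = s) := by
      apply Finset.filter_congr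
      intro c _
      rw [hsameT c]
    by_cases hcase : T r (lam r) = s
    · rw [if_pos hcase, if_pos hcase,
        Finset.card_insert_of_notMem (fun h => by
          have := (Finset.mem_Ioc.mp (Finset.mem_filter.mp h).1).2
          omega), hrest]
    · rw [if_neg hcase, if_neg hcase, hrest]
      simp
  -- partial sums, three regimes
  have hsum1 : ∀ s j, j < t →
      (∑ k ∈ Finset.Icc 1 j, RowCount (decAt lam r) (decAt mu t) (DeleteResult T r t p) s k)
        = ∑ k ∈ Finset.Icc 1 j, RowCount lam mu T s k := by
    intro s j hj
    apply Finset.sum_congr rfl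
    intro k hk
    have := (Finset.mem_Icc.mp hk).2
    exact hsame s k (Or.inl (by omega))
  have hsum2 : ∀ s j, t ≤ j → j < r →
      (∑ k ∈ Finset.Icc 1 j, RowCount (decAt lam r) (decAt mu t) (DeleteResult T r t p) s k)
        = (∑ k ∈ Finset.Icc 1 j, RowCount lam mu T s k)
            + (if T (j+1) (p (j+1)) = s then 1 else 0) := by
    intro s j hj1 hj2
    induction j, hj1 using Nat.le_induction with
    | base =>
      rw [sum_Icc_split _ t ht, sum_Icc_split _ t ht, hsum1 s (t-1) (by omega), hrowt s]
      omega
    | succ n hn ih =>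
      rw [sum_Icc_split _ (n+1) (by omega), sum_Icc_split _ (n+1) (by omega)]
      simp only [Nat.add_sub_cancel]
      rw [ih (by omega)]
      have := hrowm s (n+1) (by omega) (by omega)
      omega
  have hsum3 : ∀ s j, r ≤ j →
      (∑ k ∈ Finset.Icc 1 j, RowCount (decAt lam r) (decAt mu t) (DeleteResult T r t p) s k)
        = ∑ k ∈ Finset.Icc 1 j, RowCount lam mu T s k := by
    intro s j hj
    induction j, hj using Nat.le_induction with
    | base =>
      rw [sum_Icc_split _ r hr, sum_Icc_split _ r hr,
        hsum2 s (r-1) (by omega) (by omega)]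
      have h := hrowr s
      have hid : r - 1 + 1 = r := by omega
      rw [hid, hpr]
      omega
    | succ n hn ih =>
      rw [sum_Icc_split _ (n+1) (by omega), sum_Icc_split _ (n+1) (by omega)]
      simp only [Nat.add_sub_cancel]
      rw [ih, hsame s (n+1) (Or.inr (by omega))]
  -- the crux: if the bumped-in entry of row j+1 is s and row j's path entry is ≤ s-2,
  -- then the old lattice inequality at (j, s) is strict
  have hcrux : ∀ s j, 2 ≤ s → t ≤ j → j < r → T (j+1) (p (j+1)) = s →
      T j (p j) + 2 ≤ s →
      (∑ k ∈ Finset.Icc 1 j, RowCount lam mu T s k) + 1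
        ≤ ∑ k ∈ Finset.Icc 1 (j-1), RowCount lam mu T (s-1) k := by
    intro s j hs hj1 hj2 he hej
    have hb := hpkb (j+1) (by omega) (by omega)
    have hmem : p (j+1) ∈ (Finset.Ioc (mu (j+1)) (lam (j+1))).filter
        (fun c => T (j+1) c = s) :=
      Finset.mem_filter.mpr ⟨Finset.mem_Ioc.mpr
        ⟨hmupk (j+1) (by omega) (by omega), hb.2⟩, he⟩
    have h1 : 1 ≤ RowCount lam mu T s (j+1) := by
      unfold RowCount
      exact Finset.card_pos.mpr ⟨_, hmem⟩
    have h2 := hlat (j+1) s (by omega) hs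
    simp only [Nat.add_sub_cancel] at h2
    have h3 := sum_Icc_split (fun k => RowCount lam mu T s k) (j+1) (by omega)
    simp only [Nat.add_sub_cancel] at h3
    have hz : RowCount lam mu T (s-1) j = 0 := by
      unfold RowCount
      rw [Finset.card_eq_zero, Finset.filter_eq_empty_iff]
      intro c hc
      simp only [Finset.mem_Ioc] at hc
      rcases le_or_gt c (p j) with hcp | hcp
      · have hle : T j c ≤ T j (p j) :=
          rowWeak_mono hrow j (by omega) c (p j) (by omega) hcp (hpkb j hj1 (by omega)).2
        omega
      · have := (hstep j hj1 hj2).2.2.2 c hcp hc.2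
        omega
    have h4 := sum_Icc_split (fun k => RowCount lam mu T (s-1) k) j (by omega)
    omega
  -- assemble
  intro j s hj hs
  rcases lt_or_ge j t with hcase1 | hcase1
  · rw [hsum1 s j hcase1, hsum1 (s-1) (j-1) (by omega)]
    exact hlat j s hj hs
  rcases lt_or_ge j r with hcase2 | hcase2
  · -- t ≤ j < r
    have h2 := hsum2 s j hcase1 hcase2
    rcases eq_or_lt_of_le hcase1 with rfl | hjt
    · -- j = t
      rw [h2, hsum1 (s-1) (t-1) (by omega)]
      by_cases he : T (t+1) (p (t+1)) = s
      · rw [if_pos he]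
        have := hcrux s t hs le_rfl hcase2 he (by omega)
        omega
      · rw [if_neg he]
        have := hlat t s hj hs
        omega
    · -- t < j
      have h3 := hsum2 (s-1) (j-1) (by omega) (by omega)
      have hid : j - 1 + 1 = j := by omega
      rw [hid] at h3
      rw [h2, h3]
      by_cases he : T (j+1) (p (j+1)) = s
      · rw [if_pos he]
        by_cases he2 : T j (p j) = s - 1
        · rw [if_pos he2]
          exact Nat.add_le_add_right (hlat j s hj hs) 1
        · rw [if_neg he2]
          have hej : T j (p j) + 2 ≤ s := by
            have := (hstep j (by omega) hcase2).2.2.1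
            omega
          have := hcrux s j hs (by omega) hcase2 he hej
          omega
      · rw [if_neg he]
        exact le_trans (hlat j s hj hs) (Nat.le_add_right _ _)
  · -- r ≤ j
    rw [hsum3 s j hcase2]
    rcases eq_or_lt_of_le hcase2 with rfl | hjr
    · have h3 := hsum2 (s-1) (r-1) (by omega) (by omega)
      have hid : r - 1 + 1 = r := by omega
      rw [hid] at h3
      rw [h3]
      exact le_trans (hlat r s hj hs) (Nat.le_add_right _ _)
    · rw [hsum3 (s-1) (j-1) (by omega)]
      exact hlat j s hj hs
end

section
/- Let λ have exactly n parts and let T ∈ LR(λ/μ,ν) be a Littlewood–Richardson tableau. Then the deletion operator δ_{n,λ_n} starting at the corner (n,λ_n) maps T to a Littlewood–Richardson tableau T' with: T' ∈ LR((λ−ε_n)/μ, ν−ε_n) if ν_n > 0 (the corner contains n and is simply removed); T' ∈ LR((λ−ε_n)/(μ−ε_k), ν) for some 1 ≤ k < n if ν_n = 0 and λ_n > μ_n (type (ii) deletion with terminating row k); and T' ∈ LR((λ−ε_n)/(μ−ε_n), ν) if ν_n = 0 and λ_n = μ_n (removal of an empty corner cell). -/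
/-!
The lattice property bounds every entry of row `r` by `r`, so the entries `n` lie in row `n`.
If `ν_n > 0` the corner therefore holds `n`, and removing it can only break a lattice
inequality for an entry `n + 1`, of which there are none.

If `ν_n = 0` and the corner is a skew cell, its entry lies strictly between `0` and `n`. The
bumping path goes up with strictly decreasing entries, so it reaches a cell of `μ` by row `1`,
and maximality of the bumps makes that cell the last cell of `μ` in its row `t`. Deletion moves
each path entry one row up, which raises the count of `s` in rows `≤ k` exactly when the path
carries `s` from row `k + 1` to row `k`. Then either it also carries `s - 1` out of row `k`, or
row `k` holds no `s - 1` at all, and the lattice inequality at row `k + 1` leaves room for it.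

If the corner lies in `μ`, removing it from both shapes changes no count.
-/

open Finset

theorem IsPartitionFun.le_of_le {f : ℕ → ℕ} (hf : IsPartitionFun f) {a b : ℕ} (ha : 1 ≤ a)
    (hab : a ≤ b) : f b ≤ f a := by
  induction b, hab using Nat.le_induction with
  | base => exact le_rfl
  | succ b hab ih => exact (hf b (ha.trans hab)).trans ih

theorem IsPartitionFun.eq_zero_of_lt {f : ℕ → ℕ} (hf : IsPartitionFun f) {n r : ℕ}
    (hn : f (n + 1) = 0) (hr : n < r) : f r = 0 :=
  Nat.eq_zero_of_le_zero (hn ▸ hf.le_of_le (Nat.le_add_left 1 n) hr)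

theorem RowWeak.le_of_le {lam : ℕ → ℕ} {T : ℕ → ℕ → ℕ} (h : RowWeak lam T) {r c c' : ℕ}
    (hr : 1 ≤ r) (hc : 1 ≤ c) (hcc' : c ≤ c') (hc' : c' ≤ lam r) : T r c ≤ T r c' := by
  induction c', hcc' using Nat.le_induction with
  | base => exact le_rfl
  | succ d hcd ih => exact (ih (by omega)).trans (h r d hr (hc.trans hcd) (by omega))

theorem ZeroIffInner.pos {lam mu : ℕ → ℕ} {T : ℕ → ℕ → ℕ} (h : ZeroIffInner lam mu T)
    {r c : ℕ} (hr : 1 ≤ r) (hmc : mu r < c) (hcl : c ≤ lam r) : 0 < T r c :=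
  Nat.pos_of_ne_zero fun h0 => absurd ((h r c hr (by omega) hcl).mp h0) (by omega)

@[simp]
theorem decAt_self (f : ℕ → ℕ) (m : ℕ) : decAt f m m = f m - 1 := if_pos rfl

theorem decAt_of_ne (f : ℕ → ℕ) {m k : ℕ} (h : k ≠ m) : decAt f m k = f k := if_neg h

theorem decAt_le (f : ℕ → ℕ) (m k : ℕ) : decAt f m k ≤ f k := by
  unfold decAt
  split_ifs with h
  · exact h ▸ Nat.sub_le _ _
  · exact le_rfl

theorem ZeroIffInner.of_le {lam lam' mu : ℕ → ℕ} {T : ℕ → ℕ → ℕ} (h : ZeroIffInner lam mu T)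
    (hle : ∀ k, lam' k ≤ lam k) : ZeroIffInner lam' mu T :=
  fun r c hr hc hcl => h r c hr hc (hcl.trans (hle r))

theorem RowWeak.of_le {lam lam' : ℕ → ℕ} {T : ℕ → ℕ → ℕ} (h : RowWeak lam T)
    (hle : ∀ k, lam' k ≤ lam k) : RowWeak lam' T :=
  fun r c hr hc hcl => h r c hr hc (hcl.trans_le (hle r))

theorem ColStrict.of_le {lam lam' mu : ℕ → ℕ} {T : ℕ → ℕ → ℕ} (h : ColStrict lam mu T)
    (hle : ∀ k, lam' k ≤ lam k) : ColStrict lam' mu T :=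
  fun r c hr hmc hcl => h r c hr hmc (hcl.trans (hle (r + 1)))

theorem Finset.sum_Icc_eq_add_of_telescope {M : Type*} [AddCommMonoid M] {f g e : ℕ → M}
    (h0 : e 0 = 0) (h : ∀ k, 1 ≤ k → f k + e (k - 1) = g k + e k) (r : ℕ) :
    ∑ k ∈ Icc 1 r, f k = ∑ k ∈ Icc 1 r, g k + e r := by
  induction r with
  | zero => simp [h0]
  | succ r ih =>
    have hr := h (r + 1) (by omega)
    rw [Nat.add_sub_cancel] at hr
    rw [sum_Icc_succ_top (by omega), sum_Icc_succ_top (by omega), ih, add_assoc, add_comm (e r),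
      hr, add_assoc]

theorem Finset.card_filter_insert_eq {α : Type*} [DecidableEq α] {A : Finset α} {a : α}
    (ha : a ∉ A) (q : α → Prop) [DecidablePred q] :
    #((insert a A).filter q) = #(A.filter q) + if q a then 1 else 0 := by
  rw [filter_insert]
  split_ifs
  · exact card_insert_of_notMem fun hmem => ha (mem_of_mem_filter a hmem)
  · rfl

section RowCount

variable {lam mu lam' mu' : ℕ → ℕ} {T T' : ℕ → ℕ → ℕ}

theorem rowCount_congr {s k : ℕ} (hl : lam' k = lam k) (hm : mu' k = mu k)
    (hT : ∀ c ∈ Ioc (mu k) (lam k), T' k c = T k c) :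
    RowCount lam' mu' T' s k = RowCount lam mu T s k := by
  unfold RowCount
  rw [hl, hm, filter_congr fun c hc => by rw [hT c hc]]

theorem rowCount_pos {r c s : ℕ} (hmc : mu r < c) (hcl : c ≤ lam r) (hs : T r c = s) :
    0 < RowCount lam mu T s r :=
  card_pos.mpr ⟨c, mem_filter.mpr ⟨mem_Ioc.mpr ⟨hmc, hcl⟩, hs⟩⟩

theorem rowCount_decAt_self (s : ℕ) {m : ℕ} (h : mu m < lam m) :
    RowCount lam mu T s m = RowCount (decAt lam m) mu T s m + if T m (lam m) = s then 1 else 0 := by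
  have hIoc : Ioc (mu m) (lam m) = insert (lam m) (Ioc (mu m) (lam m - 1)) := by
    ext x; simp only [mem_Ioc, mem_insert]; omega
  unfold RowCount
  rw [decAt_self, hIoc, card_filter_insert_eq (by simp only [mem_Ioc]; omega)]

theorem rowCount_decAt_inner_self (s : ℕ) {m : ℕ} (h1 : 1 ≤ mu m) (h : mu m ≤ lam m) :
    RowCount lam (decAt mu m) T s m = RowCount lam mu T s m + if T m (mu m) = s then 1 else 0 := by
  have hIoc : Ioc (mu m - 1) (lam m) = insert (mu m) (Ioc (mu m) (lam m)) := by
    ext x; simp only [mem_Ioc, mem_insert]; omega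
  unfold RowCount
  rw [decAt_self, hIoc, card_filter_insert_eq (by simp only [mem_Ioc]; omega)]

theorem rowCount_update_cell (s : ℕ) {k a : ℕ} (ha : a ∈ Ioc (mu k) (lam k))
    (hT : ∀ c, c ≠ a → T' k c = T k c) :
    RowCount lam mu T' s k + (if T k a = s then 1 else 0) =
      RowCount lam mu T s k + if T' k a = s then 1 else 0 := by
  unfold RowCount
  rw [← insert_erase ha, card_filter_insert_eq (notMem_erase a _),
    card_filter_insert_eq (notMem_erase a _),
    filter_congr fun c hc => by rw [hT c (ne_of_mem_erase hc)]]
  omega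

end RowCount

namespace LatticeProp

variable {lam mu : ℕ → ℕ} {T : ℕ → ℕ → ℕ} (hlat : LatticeProp lam mu T)
include hlat

theorem sum_rowCount_eq_zero {r s : ℕ} (h : r < s) :
    ∑ r' ∈ Icc 1 r, RowCount lam mu T s r' = 0 := by
  induction r generalizing s with
  | zero => simp
  | succ r ih =>
    have hstep := hlat (r + 1) s (by omega) (by omega)
    rw [Nat.add_sub_cancel, ih (by omega)] at hstep
    exact Nat.eq_zero_of_le_zero hstep

theorem rowCount_eq_zero {r s : ℕ} (hr : 1 ≤ r) (h : r < s) : RowCount lam mu T s r = 0 :=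
  Nat.eq_zero_of_le_zero <| (hlat.sum_rowCount_eq_zero h) ▸
    single_le_sum (fun _ _ => Nat.zero_le _) (mem_Icc.mpr ⟨hr, le_rfl⟩)

theorem entry_le_row {r c : ℕ} (hr : 1 ≤ r) (hmc : mu r < c) (hcl : c ≤ lam r) : T r c ≤ r := by
  by_contra! h
  exact (rowCount_pos hmc hcl rfl).ne' (hlat.rowCount_eq_zero hr h)

theorem sum_rowCount_eq_zero_of_length_lt (hlam : IsPartitionFun lam) {n s : ℕ}
    (hlen' : lam (n + 1) = 0) (hs : n < s) (r : ℕ) :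
    ∑ r' ∈ Icc 1 r, RowCount lam mu T s r' = 0 := by
  refine sum_eq_zero fun k hk => ?_
  rcases le_or_gt k n with hkn | hkn
  · exact hlat.rowCount_eq_zero (mem_Icc.mp hk).1 (by omega)
  · simp [RowCount, hlam.eq_zero_of_lt hlen' hkn]

theorem corner_eq_of_weight_pos (hrow : RowWeak lam T) {n : ℕ} (hn : 1 ≤ n)
    (h : 0 < ∑ r ∈ Icc 1 n, RowCount lam mu T n r) : mu n < lam n ∧ T n (lam n) = n := by
  obtain ⟨r, hr, hne⟩ := exists_ne_zero_of_sum_ne_zero h.ne'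
  obtain ⟨hr1, hrn⟩ := mem_Icc.mp hr
  obtain rfl : r = n := by
    by_contra hrn'
    exact hne (hlat.rowCount_eq_zero hr1 (by omega))
  obtain ⟨c, hc⟩ := card_pos.mp (Nat.pos_of_ne_zero hne)
  obtain ⟨hcI, hcr⟩ := mem_filter.mp hc
  obtain ⟨hmc, hcl⟩ := mem_Ioc.mp hcI
  have hle := hrow.le_of_le hr1 (by omega) hcl le_rfl
  exact ⟨hmc.trans_le hcl, le_antisymm (hlat.entry_le_row hr1 (hmc.trans_le hcl) le_rfl)
    (hcr.symm.le.trans hle)⟩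

theorem corner_lt_of_weight_zero {n : ℕ} (hn : 1 ≤ n) (hmn : mu n < lam n)
    (h : ∑ r ∈ Icc 1 n, RowCount lam mu T n r = 0) : T n (lam n) < n := by
  refine (hlat.entry_le_row hn hmn le_rfl).lt_of_ne fun heq => ?_
  have hpos := rowCount_pos (T := T) hmn le_rfl heq
  exact hpos.ne' (sum_eq_zero_iff.mp h n (mem_Icc.mpr ⟨hn, le_rfl⟩))

end LatticeProp

section CornerRemoval

variable {lam mu : ℕ → ℕ} {T : ℕ → ℕ → ℕ} {n : ℕ}

theorem sum_rowCount_decAt_corner (hn : 1 ≤ n) (hmn : mu n < lam n) (hcorner : T n (lam n) = n)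
    (s r : ℕ) :
    ∑ k ∈ Icc 1 r, RowCount lam mu T s k =
      ∑ k ∈ Icc 1 r, RowCount (decAt lam n) mu T s k + if n ≤ r ∧ s = n then 1 else 0 := by
  refine sum_Icc_eq_add_of_telescope (e := fun k => if n ≤ k ∧ s = n then 1 else 0)
    (if_neg (by omega)) (fun k hk => ?_) r
  by_cases hkn : k = n
  · subst hkn
    rw [rowCount_decAt_self s hmn, hcorner]
    split_ifs <;> omega
  · rw [rowCount_congr (decAt_of_ne lam hkn) rfl fun _ _ => rfl]
    split_ifs <;> omega

theorem LatticeProp.decAt_corner (hlat : LatticeProp lam mu T) (hlam : IsPartitionFun lam)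
    (hlen' : lam (n + 1) = 0) (hn : 1 ≤ n) (hmn : mu n < lam n) (hcorner : T n (lam n) = n) :
    LatticeProp (decAt lam n) mu T := by
  intro r s hr hs
  have h := hlat r s hr hs
  rw [sum_rowCount_decAt_corner hn hmn hcorner, sum_rowCount_decAt_corner hn hmn hcorner] at h
  by_cases hnew : s = n + 1 ∧ n ≤ r - 1
  · have hzero := hlat.sum_rowCount_eq_zero_of_length_lt hlam hlen' (s := s) (by omega) r
    rw [sum_rowCount_decAt_corner hn hmn hcorner] at hzero
    omega
  · split_ifs at h <;> omega

end CornerRemoval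

section EmptyCorner

variable {lam mu : ℕ → ℕ} {T : ℕ → ℕ → ℕ} {m : ℕ}

theorem rowCount_decAt_decAt (h : lam m = mu m) (s k : ℕ) :
    RowCount (decAt lam m) (decAt mu m) T s k = RowCount lam mu T s k := by
  by_cases hk : k = m
  · subst hk
    simp [RowCount, h]
  · exact rowCount_congr (decAt_of_ne lam hk) (decAt_of_ne mu hk) fun _ _ => rfl

theorem ZeroIffInner.decAt_decAt (hzero : ZeroIffInner lam mu T) (h : lam m = mu m) :
    ZeroIffInner (decAt lam m) (decAt mu m) T := by
  intro r c hr hc hcl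
  by_cases hrm : r = m
  · subst hrm
    rw [decAt_self] at hcl ⊢
    exact iff_of_true ((hzero r c hr hc (by omega)).mpr (by omega)) (by omega)
  · rw [decAt_of_ne _ hrm] at hcl ⊢
    exact hzero r c hr hc hcl

theorem ColStrict.decAt_decAt (hcol : ColStrict lam mu T) (hmu : IsPartitionFun mu)
    (hlen' : lam (m + 1) = 0) (h : lam m = mu m) :
    ColStrict (decAt lam m) (decAt mu m) T := by
  intro r c hr hmc hcl
  by_cases hrm : r = m
  · subst hrm
    rw [decAt_of_ne lam (by omega), hlen'] at hcl
    rw [decAt_self] at hmc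
    omega
  · rw [decAt_of_ne mu hrm] at hmc
    by_cases hrm' : r + 1 = m
    · subst hrm'
      rw [decAt_self] at hcl
      have := hmu.le_of_le hr (Nat.le_add_right r 1)
      omega
    · rw [decAt_of_ne lam hrm'] at hcl
      exact hcol r c hr hmc hcl

end EmptyCorner

section DeleteResult

variable {T : ℕ → ℕ → ℕ} {r t k c : ℕ} {p : ℕ → ℕ}

theorem deleteResult_of_not_mem_path (h : ¬(t ≤ k ∧ k < r ∧ c = p k)) :
    DeleteResult T r t p k c = T k c := if_neg h

theorem deleteResult_of_mem_path (htk : t ≤ k) (hkr : k < r) :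
    DeleteResult T r t p k (p k) = T (k + 1) (p (k + 1)) := if_pos ⟨htk, hkr, rfl⟩

end DeleteResult

theorem DeletionPath.extend {lam : ℕ → ℕ} {T : ℕ → ℕ → ℕ} {t k c c' : ℕ} {p : ℕ → ℕ}
    (hp : DeletionPath (Function.update lam k c') T k t p) (htk : t ≤ k)
    (hc' : 1 ≤ c') (hc'l : c' ≤ lam k) (hlt : T k c' < T (k + 1) c)
    (hmax : ∀ c'', c' < c'' → c'' ≤ lam k → T (k + 1) c ≤ T k c'') (hpos : 0 < T (k + 1) c) :
    DeletionPath (Function.update lam (k + 1) c) T (k + 1) t (Function.update p (k + 1) c) := by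
  obtain ⟨hstart, hsteps, hend, hposs⟩ := hp
  rw [Function.update_self] at hstart
  refine ⟨by simp, fun i hti hik => ?_, by rwa [Function.update_of_ne (by omega)],
    fun i hti hik => ?_⟩
  · rw [Function.update_of_ne (by omega : i ≠ k + 1), Function.update_of_ne (by omega : i ≠ k + 1)]
    rcases (Nat.lt_succ_iff.mp hik).lt_or_eq with hik | rfl
    · rw [Function.update_of_ne (by omega : i + 1 ≠ k + 1)]
      simpa only [Function.update_of_ne (by omega : i ≠ k)] using hsteps i hti hik
    · rw [Function.update_self, hstart]
      exact ⟨hc', hc'l, hlt, hmax⟩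
  · rcases hik.lt_or_eq with hik | rfl
    · rw [Function.update_of_ne (by omega)]
      exact hposs i hti (by omega)
    · rwa [Function.update_self]

/-- A deletion path starting from an arbitrary cell `(k, c)` is encoded as a deletion path from
the corner of the shape whose row `k` is cut at column `c`. -/
theorem exists_deletionPath_from {lam mu : ℕ → ℕ} {T : ℕ → ℕ → ℕ} (hlam : IsPartitionFun lam)
    (hzero : ZeroIffInner lam mu T) (hcol : ColStrict lam mu T) {k c : ℕ} (hk : 1 ≤ k)
    (hc : 1 ≤ c) (hcl : c ≤ lam k) (hlt : T k c < k) :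
    ∃ t p, 1 ≤ t ∧ t ≤ k ∧ DeletionPath (Function.update lam k c) T k t p := by
  induction k generalizing c with
  | zero => omega
  | succ k ih =>
    by_cases h0 : T (k + 1) c = 0
    · exact ⟨k + 1, fun _ => c, hk, le_rfl, by simp, fun i _ _ => by omega, h0,
        fun i _ _ => by omega⟩
    have hk1 : 1 ≤ k := by omega
    have hcl' : c ≤ lam k := hcl.trans (hlam k hk1)
    set S := (Icc 1 (lam k)).filter fun c' => T k c' < T (k + 1) c
    have hcS : c ∈ S := by
      refine mem_filter.mpr ⟨mem_Icc.mpr ⟨hc, hcl'⟩, ?_⟩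
      by_cases hmc : mu k < c
      · exact hcol k c hk1 hmc hcl
      · rw [(hzero k c hk1 hc hcl').mpr (not_lt.mp hmc)]
        omega
    obtain ⟨c', hc'S, hmax⟩ := S.exists_max_image id ⟨c, hcS⟩
    obtain ⟨hc'I, hc'lt⟩ := mem_filter.mp hc'S
    obtain ⟨hc'1, hc'l⟩ := mem_Icc.mp hc'I
    obtain ⟨t, p, ht, htk, hp⟩ := ih hk1 hc'1 hc'l (by omega)
    refine ⟨t, Function.update p (k + 1) c, ht, by omega,
      hp.extend htk hc'1 hc'l hc'lt ?_ (by omega)⟩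
    intro c'' hc'' hc''l
    by_contra! hlt''
    have := hmax c'' (mem_filter.mpr ⟨mem_Icc.mpr ⟨by omega, hc''l⟩, hlt''⟩)
    exact absurd this (by simpa using hc'')

namespace DeletionPath

variable {lam mu : ℕ → ℕ} {T : ℕ → ℕ → ℕ} {r t k : ℕ} {p : ℕ → ℕ}
  (hp : DeletionPath lam T r t p)
include hp

theorem col_le (htk : t ≤ k) (hkr : k ≤ r) : p k ≤ lam k := by
  rcases hkr.lt_or_eq with hkr | rfl
  · exact (hp.2.1 k htk hkr).2.1
  · exact hp.1.le

theorem one_le_col_of_lt (htk : t ≤ k) (hkr : k < r) : 1 ≤ p k := (hp.2.1 k htk hkr).1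

theorem one_le_col (hlen : 1 ≤ lam r) (htk : t ≤ k) (hkr : k ≤ r) : 1 ≤ p k := by
  rcases hkr.lt_or_eq with hkr | rfl
  · exact hp.one_le_col_of_lt htk hkr
  · exact hp.1 ▸ hlen

theorem entry_lt (htk : t ≤ k) (hkr : k < r) : T k (p k) < T (k + 1) (p (k + 1)) :=
  (hp.2.1 k htk hkr).2.2.1

theorem entry_le_of_col_lt (htk : t ≤ k) (hkr : k < r) {c : ℕ} (hc : p k < c) (hcl : c ≤ lam k) :
    T (k + 1) (p (k + 1)) ≤ T k c :=
  (hp.2.1 k htk hkr).2.2.2 c hc hcl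

theorem entry_start : T t (p t) = 0 := hp.2.2.1

theorem entry_pos (htk : t < k) (hkr : k ≤ r) : 0 < T k (p k) := hp.2.2.2 k htk hkr

theorem inner_lt_col (hzero : ZeroIffInner lam mu T) (hlen : 1 ≤ lam r) (ht : 1 ≤ t)
    (htk : t < k) (hkr : k ≤ r) : mu k < p k := by
  by_contra! h
  have := (hzero k (p k) (by omega) (hp.one_le_col hlen htk.le hkr) (hp.col_le htk.le hkr)).mpr h
  exact (hp.entry_pos htk hkr).ne' this

/-- The path moves weakly left as it goes up: a cell right of `p k` in row `k` holds `0` or,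
by column strictness, something smaller than the cell below it. -/
theorem col_succ_le (hlam : IsPartitionFun lam) (hzero : ZeroIffInner lam mu T)
    (hcol : ColStrict lam mu T) (ht : 1 ≤ t) (htk : t ≤ k) (hkr : k < r) : p (k + 1) ≤ p k := by
  by_contra! h
  have hcl : p (k + 1) ≤ lam (k + 1) := hp.col_le (by omega) hkr
  have hge := hp.entry_le_of_col_lt htk hkr h (hcl.trans (hlam k (by omega)))
  have hpos := hp.entry_pos (k := k + 1) (by omega) hkr
  by_cases hmc : mu k < p (k + 1)
  · exact absurd (hcol k (p (k + 1)) (by omega) hmc hcl) (by omega)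
  · rw [(hzero k (p (k + 1)) (by omega) (by omega) (hcl.trans (hlam k (by omega)))).mpr
      (by omega)] at hge
    omega

theorem col_start_eq (hzero : ZeroIffInner lam mu T) (hsub : ∀ k, 1 ≤ k → mu k ≤ lam k)
    (ht : 1 ≤ t) (htr : t < r) : p t = mu t := by
  have h1 := hp.one_le_col_of_lt le_rfl htr
  have hle : p t ≤ mu t :=
    (hzero t (p t) ht h1 (hp.col_le le_rfl htr.le)).mp hp.entry_start
  refine hle.antisymm (not_lt.mp fun hlt => ?_)
  have hge := hp.entry_le_of_col_lt le_rfl htr hlt (hsub t ht)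
  rw [(hzero t (mu t) ht (by omega) (hsub t ht)).mpr le_rfl] at hge
  exact absurd (hp.entry_pos (k := t + 1) (by omega) htr) (by omega)

theorem zeroIffInner_deleteResult (hzero : ZeroIffInner lam mu T)
    (hsub : ∀ k, 1 ≤ k → mu k ≤ lam k) (ht : 1 ≤ t) (htr : t < r) (hlen : 1 ≤ lam r) :
    ZeroIffInner (decAt lam r) (decAt mu t) (DeleteResult T r t p) := by
  have hpt := hp.col_start_eq hzero hsub ht htr
  intro k c hk hc hcl
  by_cases hon : t ≤ k ∧ k < r ∧ c = p k
  · obtain ⟨htk, hkr, rfl⟩ := hon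
    rw [deleteResult_of_mem_path htk hkr]
    have hinner : decAt mu t k < p k := by
      rcases htk.lt_or_eq with htk | rfl
      · rw [decAt_of_ne mu htk.ne']
        exact hp.inner_lt_col hzero hlen ht htk hkr.le
      · have := hp.one_le_col hlen le_rfl hkr.le
        rw [decAt_self]
        omega
    exact iff_of_false (hp.entry_pos (k := k + 1) (by omega) hkr).ne' (by omega)
  · rw [deleteResult_of_not_mem_path hon]
    have hcl' := hcl.trans (decAt_le lam r k)
    by_cases hkt : k = t
    · subst hkt
      have hne : c ≠ mu k := fun h => hon ⟨le_rfl, htr, h.trans hpt.symm⟩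
      rw [decAt_self, hzero k c hk hc hcl']
      omega
    · rw [decAt_of_ne mu hkt]
      exact hzero k c hk hc hcl'

theorem rowWeak_deleteResult (hrow : RowWeak lam T) :
    RowWeak (decAt lam r) (DeleteResult T r t p) := by
  intro k c hk hc hcl
  have hcl' : c + 1 ≤ lam k := hcl.trans_le (decAt_le lam r k)
  by_cases hon : t ≤ k ∧ k < r ∧ c = p k
  · obtain ⟨htk, hkr, rfl⟩ := hon
    rw [deleteResult_of_mem_path htk hkr, deleteResult_of_not_mem_path (by omega)]
    exact hp.entry_le_of_col_lt htk hkr (Nat.lt_succ_self _) hcl'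
  · rw [deleteResult_of_not_mem_path hon]
    by_cases hon' : t ≤ k ∧ k < r ∧ c + 1 = p k
    · obtain ⟨htk, hkr, hc1⟩ := hon'
      rw [hc1, deleteResult_of_mem_path htk hkr]
      have hle := hrow k c hk hc (by omega)
      rw [hc1] at hle
      exact hle.trans (hp.entry_lt htk hkr).le
    · rw [deleteResult_of_not_mem_path hon']
      exact hrow k c hk hc (by omega)

theorem deleteResult_lt_of_mem_path (hlam : IsPartitionFun lam) (hzero : ZeroIffInner lam mu T)
    (hcol : ColStrict lam mu T) (ht : 1 ≤ t) (htk : t ≤ k) (hkr : k < r)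
    (hcl : p k ≤ decAt lam r (k + 1)) :
    DeleteResult T r t p k (p k) < DeleteResult T r t p (k + 1) (p k) := by
  have hmono := hp.col_succ_le hlam hzero hcol ht htk hkr
  rw [deleteResult_of_mem_path htk hkr]
  have hkr' : k + 1 ≠ r := by
    rintro rfl
    rw [decAt_self, ← hp.1] at hcl
    have := hp.one_le_col_of_lt htk hkr
    omega
  by_cases hon : p k = p (k + 1)
  · rw [hon, deleteResult_of_mem_path (by omega) (by omega)]
    exact hp.entry_lt (by omega) (by omega)
  · -- `(k + 1, p k)` lies right of the path in row `k + 1`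
    rw [deleteResult_of_not_mem_path (by omega)]
    rw [decAt_of_ne lam hkr'] at hcl
    exact (hp.entry_lt (by omega) (by omega)).trans_le
      (hp.entry_le_of_col_lt (by omega) (by omega) (by omega) hcl)

theorem colStrict_deleteResult (hlam : IsPartitionFun lam) (hmu : IsPartitionFun mu)
    (hsub : ∀ k, 1 ≤ k → mu k ≤ lam k) (hzero : ZeroIffInner lam mu T) (hrow : RowWeak lam T)
    (hcol : ColStrict lam mu T) (ht : 1 ≤ t) (htr : t < r) :
    ColStrict (decAt lam r) (decAt mu t) (DeleteResult T r t p) := by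
  have hpt := hp.col_start_eq hzero hsub ht htr
  intro k c hk hmc hcl
  by_cases hon : t ≤ k ∧ k < r ∧ c = p k
  · obtain ⟨htk, hkr, rfl⟩ := hon
    exact hp.deleteResult_lt_of_mem_path hlam hzero hcol ht htk hkr hcl
  rw [deleteResult_of_not_mem_path hon]
  by_cases hon' : t ≤ k + 1 ∧ k + 1 < r ∧ c = p (k + 1)
  · obtain ⟨htk, hkr, rfl⟩ := hon'
    rw [deleteResult_of_mem_path htk hkr]
    have htk' : t ≤ k := by
      by_contra! hkt
      obtain rfl : t = k + 1 := by omega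
      rw [decAt_of_ne mu (by omega), hpt] at hmc
      exact absurd (hmu.le_of_le hk (Nat.le_add_right k 1)) (by omega)
    have hlt : p (k + 1) < p k := by
      have := hp.col_succ_le hlam hzero hcol ht htk' (by omega)
      omega
    calc T k (p (k + 1)) ≤ T k (p k) :=
          hrow.le_of_le hk (by omega) hlt.le (hp.col_le htk' (by omega))
      _ < T (k + 1) (p (k + 1)) := hp.entry_lt htk' (by omega)
      _ < T (k + 1 + 1) (p (k + 1 + 1)) := hp.entry_lt htk hkr
  · rw [deleteResult_of_not_mem_path hon']
    refine hcol k c hk ?_ (hcl.trans (decAt_le lam r (k + 1)))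
    by_cases hkt : k = t
    · subst hkt
      rw [decAt_self] at hmc
      omega
    · rwa [decAt_of_ne mu hkt] at hmc

/-- Deletion moves the entry of the path cell in row `k + 1` into row `k`. -/
theorem rowCount_deleteResult_add (hzero : ZeroIffInner lam mu T)
    (hsub : ∀ k, 1 ≤ k → mu k ≤ lam k) (ht : 1 ≤ t) (htr : t < r) (hlen : 1 ≤ lam r)
    (s : ℕ) (hk : 1 ≤ k) :
    RowCount (decAt lam r) (decAt mu t) (DeleteResult T r t p) s k +
        (if t < k ∧ k ≤ r ∧ T k (p k) = s then 1 else 0) =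
      RowCount lam mu T s k + if t ≤ k ∧ k < r ∧ T (k + 1) (p (k + 1)) = s then 1 else 0 := by
  have hpt := hp.col_start_eq hzero hsub ht htr
  rcases lt_trichotomy k t with hkt | rfl | hkt
  · rw [rowCount_congr (decAt_of_ne lam (by omega)) (decAt_of_ne mu (by omega))
      fun c _ => deleteResult_of_not_mem_path (by omega), if_neg (by omega), if_neg (by omega)]
  · have hval : DeleteResult T r k p k (mu k) = T (k + 1) (p (k + 1)) :=
      hpt ▸ deleteResult_of_mem_path le_rfl htr
    have h1 : 1 ≤ mu k := hpt ▸ hp.one_le_col hlen le_rfl htr.le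
    rw [rowCount_decAt_inner_self s h1 ((hsub k hk).trans_eq (decAt_of_ne lam htr.ne).symm),
      hval, rowCount_congr (decAt_of_ne lam htr.ne) rfl fun c hc =>
        deleteResult_of_not_mem_path (by simp only [mem_Ioc] at hc; omega)]
    split_ifs <;> omega
  rcases lt_trichotomy k r with hkr | rfl | hkr
  · have hmem : p k ∈ Ioc (mu k) (lam k) :=
      mem_Ioc.mpr ⟨hp.inner_lt_col hzero hlen ht hkt hkr.le, hp.col_le hkt.le hkr.le⟩
    have hrow := rowCount_update_cell (T := T) (T' := DeleteResult T r t p) s hmem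
      fun c hc => deleteResult_of_not_mem_path (by omega)
    rw [deleteResult_of_mem_path hkt.le hkr] at hrow
    rw [rowCount_congr (decAt_of_ne lam hkr.ne) (decAt_of_ne mu hkt.ne') fun _ _ => rfl]
    split_ifs at hrow ⊢ <;> omega
  · have hmr : mu k < lam k := hp.1 ▸ hp.inner_lt_col hzero hlen ht hkt le_rfl
    rw [rowCount_congr (T := T) rfl (decAt_of_ne mu hkt.ne')
      fun c _ => deleteResult_of_not_mem_path (by omega), rowCount_decAt_self s hmr, hp.1]
    split_ifs <;> omega
  · rw [rowCount_congr (decAt_of_ne lam hkr.ne') (decAt_of_ne mu (by omega))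
      fun c _ => deleteResult_of_not_mem_path (by omega), if_neg (by omega), if_neg (by omega)]

theorem sum_rowCount_deleteResult (hzero : ZeroIffInner lam mu T)
    (hsub : ∀ k, 1 ≤ k → mu k ≤ lam k) (ht : 1 ≤ t) (htr : t < r) (hlen : 1 ≤ lam r)
    (s n : ℕ) :
    ∑ k ∈ Icc 1 n, RowCount (decAt lam r) (decAt mu t) (DeleteResult T r t p) s k =
      ∑ k ∈ Icc 1 n, RowCount lam mu T s k +
        if t ≤ n ∧ n < r ∧ T (n + 1) (p (n + 1)) = s then 1 else 0 := by
  refine sum_Icc_eq_add_of_telescope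
    (e := fun k => if t ≤ k ∧ k < r ∧ T (k + 1) (p (k + 1)) = s then 1 else 0)
    (if_neg (by omega)) (fun k hk => ?_) n
  simp only [Nat.sub_add_cancel hk]
  have := hp.rowCount_deleteResult_add hzero hsub ht htr hlen s hk
  split_ifs at this ⊢ <;> omega

theorem latticeProp_deleteResult (hlat : LatticeProp lam mu T) (hzero : ZeroIffInner lam mu T)
    (hrow : RowWeak lam T) (hsub : ∀ k, 1 ≤ k → mu k ≤ lam k) (ht : 1 ≤ t) (htr : t < r)
    (hlen : 1 ≤ lam r) :
    LatticeProp (decAt lam r) (decAt mu t) (DeleteResult T r t p) := by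
  intro k s hk hs
  have h := hlat k s hk hs
  rw [hp.sum_rowCount_deleteResult hzero hsub ht htr hlen,
    hp.sum_rowCount_deleteResult hzero hsub ht htr hlen]
  by_cases hmove : t ≤ k ∧ k < r ∧ T (k + 1) (p (k + 1)) = s
  · obtain ⟨htk, hkr, hs'⟩ := hmove
    rw [if_pos ⟨htk, hkr, hs'⟩]
    by_cases hprev : T k (p k) = s - 1
    · -- the entry `s - 1` moves up from row `k` as well
      have htk' : t < k := htk.lt_of_ne fun hkt => by
        rw [← hkt, hp.entry_start] at hprev
        omega
      rw [if_pos ⟨by omega, by omega, by rwa [Nat.sub_add_cancel hk]⟩]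
      omega
    · -- otherwise row `k` has no `s - 1`, while row `k + 1` has the entry `s` of the path
      have hnone : RowCount lam mu T (s - 1) k = 0 := by
        refine card_eq_zero.mpr (filter_eq_empty_iff.mpr fun c hc => ?_)
        obtain ⟨hmc, hcl⟩ := mem_Ioc.mp hc
        have hlt := hp.entry_lt htk hkr
        rcases le_or_gt c (p k) with hcp | hcp
        · have := hrow.le_of_le hk (by omega) hcp (hp.col_le htk hkr.le)
          omega
        · have := hp.entry_le_of_col_lt htk hkr hcp hcl
          omega
      have hcell : 0 < RowCount lam mu T s (k + 1) :=
        rowCount_pos (hp.inner_lt_col hzero hlen ht (by omega) hkr) (hp.col_le (by omega) hkr) hs'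
      have hnext := hlat (k + 1) s (by omega) hs
      rw [sum_Icc_succ_top (by omega), Nat.add_sub_cancel] at hnext
      have hsplit : ∑ k' ∈ Icc 1 k, RowCount lam mu T (s - 1) k' =
          ∑ k' ∈ Icc 1 (k - 1), RowCount lam mu T (s - 1) k' + RowCount lam mu T (s - 1) k := by
        obtain ⟨j, rfl⟩ : ∃ j, k = j + 1 := ⟨k - 1, by omega⟩
        rw [Nat.add_sub_cancel, sum_Icc_succ_top (by omega)]
      split_ifs <;> omega
  · rw [if_neg hmove]
    split_ifs <;> omega

end DeletionPath

/-- Let `lam` have exactly `n` parts and let `T` be a Littlewood–Richardson tableau of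
shape `lam/mu` and weight `nu`.  Then the deletion operator `δ_{n, lam n}` starting at
the corner `(n, lam n)` maps `T` to an LR tableau `T'` with:
(i) if `ν_n > 0` then the corner contains `n` and is simply removed, giving
`T' ∈ LR((lam - ε_n)/mu, nu - ε_n)`;
(ii) if `ν_n = 0` and `lam n > mu n` then `0 < T n (lam n) < n` and the type (ii)
deletion with terminating row `t` (some `1 ≤ t < n`) gives
`T' ∈ LR((lam - ε_n)/(mu - ε_t), nu)`;
(iii) if `ν_n = 0` and `lam n = mu n` then removing the empty corner from both shapes
gives `T' ∈ LR((lam - ε_n)/(mu - ε_n), nu)`. -/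
theorem corner_deletion_cases (n : ℕ) (lam mu nu : ℕ → ℕ) (T : ℕ → ℕ → ℕ)
    (hn : 1 ≤ n)
    (hlam : IsPartitionFun lam) (hmu : IsPartitionFun mu)
    (hsub : ∀ k : ℕ, 1 ≤ k → mu k ≤ lam k)
    (hzero : ZeroIffInner lam mu T)
    (hrow : RowWeak lam T) (hcol : ColStrict lam mu T)
    (hlat : LatticeProp lam mu T)
    (hwt : ∀ s : ℕ, 1 ≤ s → nu s = ∑ r ∈ Finset.Icc 1 n, RowCount lam mu T s r)
    (hlen : 1 ≤ lam n) (hlen' : lam (n + 1) = 0) :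
    (0 < nu n →
      T n (lam n) = n ∧
      ZeroIffInner (decAt lam n) mu T ∧
      RowWeak (decAt lam n) T ∧
      ColStrict (decAt lam n) mu T ∧
      LatticeProp (decAt lam n) mu T ∧
      (∀ s : ℕ, 1 ≤ s →
        (if s = n then nu n - 1 else nu s) =
          ∑ r ∈ Finset.Icc 1 n, RowCount (decAt lam n) mu T s r)) ∧
    (nu n = 0 → mu n < lam n →
      0 < T n (lam n) ∧ T n (lam n) < n ∧
      ∃ t p, 1 ≤ t ∧ t < n ∧ DeletionPath lam T n t p ∧
        ZeroIffInner (decAt lam n) (decAt mu t) (DeleteResult T n t p) ∧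
        RowWeak (decAt lam n) (DeleteResult T n t p) ∧
        ColStrict (decAt lam n) (decAt mu t) (DeleteResult T n t p) ∧
        LatticeProp (decAt lam n) (decAt mu t) (DeleteResult T n t p) ∧
        (∀ s : ℕ, 1 ≤ s →
          nu s =
            ∑ r ∈ Finset.Icc 1 n,
              RowCount (decAt lam n) (decAt mu t) (DeleteResult T n t p) s r)) ∧
    (nu n = 0 → lam n = mu n →
      ZeroIffInner (decAt lam n) (decAt mu n) T ∧
      RowWeak (decAt lam n) T ∧
      ColStrict (decAt lam n) (decAt mu n) T ∧
      LatticeProp (decAt lam n) (decAt mu n) T ∧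
      (∀ s : ℕ, 1 ≤ s →
        nu s = ∑ r ∈ Finset.Icc 1 n, RowCount (decAt lam n) (decAt mu n) T s r)) := by
  refine ⟨fun hnu => ?_, fun hnu hmn => ?_, fun hnu hlm => ?_⟩
  · obtain ⟨hmn, hcorner⟩ := hlat.corner_eq_of_weight_pos hrow hn (hwt n hn ▸ hnu)
    refine ⟨hcorner, hzero.of_le (decAt_le lam n), hrow.of_le (decAt_le lam n),
      hcol.of_le (decAt_le lam n), hlat.decAt_corner hlam hlen' hn hmn hcorner, fun s hs => ?_⟩
    have hsum := sum_rowCount_decAt_corner hn hmn hcorner s n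
    rw [← hwt s hs] at hsum
    rcases eq_or_ne s n with rfl | hsn
    · rw [if_pos rfl]
      rw [if_pos ⟨le_rfl, rfl⟩] at hsum
      omega
    · rw [if_neg hsn]
      rwa [if_neg fun h => hsn h.2, add_zero] at hsum
  · have hlt := hlat.corner_lt_of_weight_zero hn hmn (hwt n hn ▸ hnu)
    obtain ⟨t, p, ht, htn, hp⟩ := exists_deletionPath_from hlam hzero hcol hn hlen le_rfl hlt
    rw [Function.update_eq_self] at hp
    have htn' : t < n := htn.lt_of_ne fun htn => by
      have := hp.entry_start
      rw [htn, hp.1] at this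
      exact (hzero.pos hn hmn le_rfl).ne' this
    refine ⟨hzero.pos hn hmn le_rfl, hlt, t, p, ht, htn', hp,
      hp.zeroIffInner_deleteResult hzero hsub ht htn' hlen, hp.rowWeak_deleteResult hrow,
      hp.colStrict_deleteResult hlam hmu hsub hzero hrow hcol ht htn',
      hp.latticeProp_deleteResult hlat hzero hrow hsub ht htn' hlen, fun s hs => ?_⟩
    rw [hwt s hs, hp.sum_rowCount_deleteResult hzero hsub ht htn' hlen, if_neg (by omega), add_zero]
  · refine ⟨hzero.decAt_decAt hlm, hrow.of_le (decAt_le lam n), hcol.decAt_decAt hmu hlen' hlm,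
      ?_, fun s hs => ?_⟩
    · simpa only [LatticeProp, rowCount_decAt_decAt hlm] using hlat
    · simpa only [rowCount_decAt_decAt hlm] using hwt s hs
end

section
/- Let a be a Littlewood–Richardson n-hive with boundary labels λ, μ, ν such that ν_n > 0 (and hence λ_n > 0). Define a' by a'(n,n) = a(n,n) − 1 and a'(i,j) = a(i,j) otherwise. Then a' is again a Littlewood–Richardson n-hive, with boundary labels λ − ε_n, μ, ν − ε_n. -/
/-- The type (i) path removal `χ_n`: decrease the bottom-right corner label by one. -/
def chiRemove (n : ℕ) (a : ℕ → ℕ → ℤ) : ℕ → ℕ → ℤ :=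
  fun i j => if i = n ∧ j = n then a n n - 1 else a i j

/-- If `a` is an LR `n`-hive with `ν_n > 0` then decreasing the vertex `a n n` by one
yields again an LR `n`-hive, with boundary labels `λ - ε_n`, `μ`, `ν - ε_n`. -/
theorem chiRemove_spec (n : ℕ) (a : ℕ → ℕ → ℤ) (hn : 1 ≤ n) (h : IsLRHive n a)
    (hnu : 0 < a n n - a (n - 1) n) :
    IsLRHive n (chiRemove n a) ∧
    (∀ k : ℕ, 1 ≤ k → k ≤ n →
      chiRemove n a 0 k - chiRemove n a 0 (k - 1) = a 0 k - a 0 (k - 1)) ∧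
    (∀ k : ℕ, 1 ≤ k → k < n →
      (chiRemove n a k k - chiRemove n a (k - 1) (k - 1) =
        a k k - a (k - 1) (k - 1)) ∧
      (chiRemove n a k n - chiRemove n a (k - 1) n = a k n - a (k - 1) n)) ∧
    chiRemove n a n n - chiRemove n a (n - 1) (n - 1) =
      (a n n - a (n - 1) (n - 1)) - 1 ∧
    chiRemove n a n n - chiRemove n a (n - 1) n = (a n n - a (n - 1) n) - 1 := by

  obtain ⟨h0, hrh, he1, he2⟩ := h
  have key : ∀ i j : ℕ, ¬(i = n ∧ j = n) → chiRemove n a i j = a i j := by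
    intro i j hij; simp [chiRemove, hij]
  have keyn : chiRemove n a n n = a n n - 1 := by simp [chiRemove]
  refine ⟨⟨?_, ?_, ?_, ?_⟩, ?_, ?_, ?_, ?_⟩
  · rw [key 0 0 (by omega)]; exact h0
  · intro i j h1 h2 h3
    obtain ⟨r1, r2, r3⟩ := hrh i j h1 h2 h3
    rw [key i (j-1) (by omega), key (i-1) j (by omega), key i j (by omega),
        key (i-1) (j-1) (by omega), key (i-1) (j-2) (by omega)]
    refine ⟨r1, r2, ?_⟩
    by_cases hc : i + 1 = n ∧ j = n
    · obtain ⟨hi, hj⟩ := hc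
      rw [hi, hj] at r3 ⊢
      rw [keyn]
      omega
    · rw [key (i+1) j hc]; exact r3
  · intro i j hij hjn
    rw [key i (j-1) (by omega), key i j (by omega)]
    exact he1 i j hij hjn
  · intro i j h1 h2 h3
    rw [key (i-1) j (by omega)]
    by_cases hc : i = n ∧ j = n
    · obtain ⟨hi, hj⟩ := hc; subst hi; subst hj
      rw [keyn]; omega
    · rw [key i j hc]; exact he2 i j h1 h2 h3
  · intro k h1 h2
    rw [key 0 k (by omega), key 0 (k-1) (by omega)]
  · intro k h1 h2
    rw [key k k (by omega), key (k-1) (k-1) (by omega),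
        key k n (by omega), key (k-1) n (by omega)]
    exact ⟨rfl, rfl⟩
  · rw [keyn, key (n-1) (n-1) (by omega)]; ring
  · rw [keyn, key (n-1) n (by omega)]; ring
end

section
/- For partitions λ, μ, ν with at most n parts, μ, ν ⊆ λ and |λ| = |μ| + |ν|, the set of Littlewood–Richardson tableaux of shape λ/μ and weight ν is in bijection with the set of Littlewood–Richardson n-hives with boundary labels (λ, μ, ν): the map sending T to the hive whose upright gradients are U_{ij} = #{entries i in row j of T} (1 ≤ i < j ≤ n), with boundary labels λ, μ, ν, is a well-defined bijection. In particular |LR(λ/μ,ν)| = |H^{(n)}(λ,μ,ν)|. -/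
/-- `T` is a Littlewood–Richardson tableau of shape `lam/mu` and weight `nu`
(zero-extended, vanishing outside the diagram of `lam`). -/
def TabCond (n : ℕ) (lam mu nu : ℕ → ℕ) (T : ℕ → ℕ → ℕ) : Prop :=
  ZeroIffInner lam mu T ∧
  (∀ r c : ℕ, ¬(1 ≤ r ∧ 1 ≤ c ∧ c ≤ lam r) → T r c = 0) ∧
  RowWeak lam T ∧ ColStrict lam mu T ∧ LatticeProp lam mu T ∧
  ∀ s : ℕ, 1 ≤ s → nu s = ∑ r ∈ Finset.Icc 1 n, RowCount lam mu T s r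

/-- `a` is an LR `n`-hive with boundary labels `lam` (bottom), `mu` (left), `nu` (right),
normalised to vanish outside the triangle `0 ≤ i ≤ j ≤ n`. -/
def HiveCond (n : ℕ) (lam mu nu : ℕ → ℕ) (a : ℕ → ℕ → ℤ) : Prop :=
  IsLRHive n a ∧
  (∀ i j : ℕ, ¬(i ≤ j ∧ j ≤ n) → a i j = 0) ∧
  ∀ k : ℕ, 1 ≤ k → k ≤ n →
    a k k - a (k - 1) (k - 1) = (lam k : ℤ) ∧
    a 0 k - a 0 (k - 1) = (mu k : ℤ) ∧
    a k n - a (k - 1) n = (nu k : ℤ)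

/-- The hive associated with an LR tableau `T`: its `β`-edge labels record the numbers of
entries `s` among the first `j` rows of `T`, so that its upright gradients are
`U_{ij} = #{entries i in row j of T}`. -/
def tabToHive (n : ℕ) (lam mu : ℕ → ℕ) (T : ℕ → ℕ → ℕ) : ℕ → ℕ → ℤ :=
  fun i j =>
    if i ≤ j ∧ j ≤ n then
      (∑ m ∈ Finset.Icc 1 j, (mu m : ℤ)) +
        ∑ s ∈ Finset.Icc 1 i, ∑ r ∈ Finset.Icc 1 j, (RowCount lam mu T s r : ℤ)
    else 0

-- Basic auxiliary lemmas

lemma Icc_one_eq_insert {j : ℕ} (hj : 1 ≤ j) :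
    Finset.Icc 1 j = insert j (Finset.Icc 1 (j - 1)) := by
  ext x; simp only [Finset.mem_Icc, Finset.mem_insert]; omega

lemma sum_Icc_sub_one {M : Type*} [AddCommGroup M] (f : ℕ → M) {j : ℕ} (hj : 1 ≤ j) :
    ∑ k ∈ Finset.Icc 1 j, f k - ∑ k ∈ Finset.Icc 1 (j - 1), f k = f j := by
  rw [Icc_one_eq_insert hj, Finset.sum_insert (by simp; omega)]
  abel

lemma sum_Icc_sub_one' (f : ℕ → ℕ) {j : ℕ} (hj : 1 ≤ j) :
    ∑ k ∈ Finset.Icc 1 j, f k = f j + ∑ k ∈ Finset.Icc 1 (j - 1), f k := by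
  rw [Icc_one_eq_insert hj, Finset.sum_insert (by simp; omega)]

lemma telescope_sum (f : ℕ → ℤ) (m : ℕ) :
    ∑ r ∈ Finset.Icc 1 m, (f r - f (r - 1)) = f m - f 0 := by
  induction m with
  | zero => simp
  | succ m ih =>
    rw [Icc_one_eq_insert (by omega : 1 ≤ m + 1), Finset.sum_insert (by simp)]
    simp only [Nat.add_sub_cancel]
    rw [ih]; ring

lemma row_mono {lam : ℕ → ℕ} {T : ℕ → ℕ → ℕ} (h : RowWeak lam T) (r : ℕ) (hr : 1 ≤ r) :
    ∀ c c' : ℕ, 1 ≤ c → c ≤ c' → c' ≤ lam r → T r c ≤ T r c' := by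
  intro c c' hc hcc
  induction c' with
  | zero => intro _; omega
  | succ c' ih =>
    intro hc'
    rcases Nat.lt_or_ge c (c' + 1) with h1 | h2
    · have hc'1 : 1 ≤ c' := by omega
      exact le_trans (ih (by omega) (by omega)) (h r c' hr hc'1 (by omega))
    · have : c = c' + 1 := by omega
      subst this; rfl

lemma downset_mem_iff {a b : ℕ} (S : Finset ℕ) (hS : S ⊆ Finset.Ioc a b)
    (hdc : ∀ c ∈ S, ∀ c', a < c' → c' ≤ c → c' ∈ S) {c : ℕ} (hc : c ∈ Finset.Ioc a b) :
    c ∈ S ↔ c ≤ a + S.card := by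
  rw [Finset.mem_Ioc] at hc
  constructor
  · intro hcS
    have h1 : Finset.Ioc a c ⊆ S := by
      intro x hx; rw [Finset.mem_Ioc] at hx; exact hdc c hcS x hx.1 hx.2
    have := Finset.card_le_card h1
    rw [Nat.card_Ioc] at this; omega
  · intro hle
    by_contra hcS
    have h2 : S ⊆ Finset.Ioc a (c - 1) := by
      intro x hx
      have hxa := (Finset.mem_Ioc.mp (hS hx)).1
      rw [Finset.mem_Ioc]
      refine ⟨hxa, ?_⟩
      by_contra hxc
      exact hcS (hdc x hx c hc.1 (by omega))
    have := Finset.card_le_card h2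
    rw [Nat.card_Ioc] at this; omega

-- Lattice consequences and cumulative row counts for tableaux

lemma rc_sum_zero {lam mu : ℕ → ℕ} {T : ℕ → ℕ → ℕ} (hlat : LatticeProp lam mu T) :
    ∀ s m : ℕ, m < s → ∑ r' ∈ Finset.Icc 1 m, RowCount lam mu T s r' = 0 := by
  intro s
  induction s with
  | zero => intro m h; omega
  | succ s ih =>
    intro m hm
    rcases Nat.eq_zero_or_pos m with rfl | hm0
    · simp
    rcases Nat.eq_zero_or_pos s with rfl | hs0
    · omega
    have h1 := hlat m (s + 1) hm0 (by omega)
    have h2 := ih (m - 1) (by omega)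
    simp only [Nat.add_sub_cancel] at h1
    omega

lemma rc_zero_of_lt {lam mu : ℕ → ℕ} {T : ℕ → ℕ → ℕ} (hlat : LatticeProp lam mu T)
    {s r : ℕ} (hr : 1 ≤ r) (hrs : r < s) : RowCount lam mu T s r = 0 := by
  have h := rc_sum_zero hlat s r hrs
  have := Finset.sum_eq_zero_iff.mp h r (by simp [Finset.mem_Icc]; omega)
  exact this

lemma rc_zero_of_gt {lam mu : ℕ → ℕ} {T : ℕ → ℕ → ℕ} {n s r : ℕ}
    (hsupp : ∀ r : ℕ, n < r → lam r = 0) (hrn : n < r) : RowCount lam mu T s r = 0 := by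
  unfold RowCount
  rw [hsupp r hrn]
  simp

/-- Cumulative count: position in row `r` of the last entry `≤ s`. -/
def cumT (lam mu : ℕ → ℕ) (T : ℕ → ℕ → ℕ) (r s : ℕ) : ℕ :=
  mu r + ∑ t ∈ Finset.Icc 1 s, RowCount lam mu T t r

lemma cumT_zero (lam mu : ℕ → ℕ) (T : ℕ → ℕ → ℕ) (r : ℕ) : cumT lam mu T r 0 = mu r := by
  simp [cumT]

lemma cumT_mono (lam mu : ℕ → ℕ) (T : ℕ → ℕ → ℕ) (r : ℕ) {s s' : ℕ} (h : s ≤ s') :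
    cumT lam mu T r s ≤ cumT lam mu T r s' := by
  unfold cumT
  have : Finset.Icc 1 s ⊆ Finset.Icc 1 s' := Finset.Icc_subset_Icc le_rfl h
  exact Nat.add_le_add_left (Finset.sum_le_sum_of_subset this) _

lemma card_filter_le_eq {lam mu : ℕ → ℕ} {T : ℕ → ℕ → ℕ} (hz : ZeroIffInner lam mu T)
    (r : ℕ) (hr : 1 ≤ r) (s : ℕ) :
    ((Finset.Ioc (mu r) (lam r)).filter (fun c => T r c ≤ s)).card
      = ∑ t ∈ Finset.Icc 1 s, RowCount lam mu T t r := by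
  induction s with
  | zero =>
    simp only [Finset.Icc_self, Nat.le_zero, Finset.sum_empty, Finset.Icc_eq_empty_of_lt
      (by omega : (1:ℕ) > 0)]
    rw [Finset.card_eq_zero, Finset.filter_eq_empty_iff]
    intro c hc
    rw [Finset.mem_Ioc] at hc
    have := hz r c hr (by omega) hc.2
    omega
  | succ s ih =>
    have hsplit : ∀ c : ℕ, (T r c ≤ s + 1) ↔ (T r c ≤ s ∨ T r c = s + 1) := by
      intro c; omega
    rw [Finset.filter_congr (fun c _ => by rw [hsplit c]), Finset.filter_or,
      Finset.card_union_of_disjoint, ih,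
      Icc_one_eq_insert (by omega : 1 ≤ s + 1), Finset.sum_insert (by simp)]
    · simp only [Nat.add_sub_cancel, RowCount]
      ring
    · rw [Finset.disjoint_filter]
      intro c _ h1 h2
      omega

/-- Membership characterisation: in a row-weak tableau with the zero/inner property,
the entry at a skew cell `c` of row `r` is `≤ s` iff `c ≤ cumT r s`. -/
lemma memB {lam mu : ℕ → ℕ} {T : ℕ → ℕ → ℕ} (hw : RowWeak lam T) (hz : ZeroIffInner lam mu T)
    (r : ℕ) (hr : 1 ≤ r) (s : ℕ) {c : ℕ} (hc : c ∈ Finset.Ioc (mu r) (lam r)) :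
    T r c ≤ s ↔ c ≤ cumT lam mu T r s := by
  set S := (Finset.Ioc (mu r) (lam r)).filter (fun c => T r c ≤ s) with hS
  have hsub : S ⊆ Finset.Ioc (mu r) (lam r) := Finset.filter_subset _ _
  have hdc : ∀ c' ∈ S, ∀ c'', mu r < c'' → c'' ≤ c' → c'' ∈ S := by
    intro c' hc' c'' h1 h2
    have hc1 : (mu r < c' ∧ c' ≤ lam r) ∧ T r c' ≤ s := by
      rw [hS, Finset.mem_filter, Finset.mem_Ioc] at hc'; exact hc'
    rw [hS, Finset.mem_filter, Finset.mem_Ioc]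
    have h3 : c'' ≤ lam r := le_trans h2 hc1.1.2
    exact ⟨⟨h1, h3⟩, le_trans (row_mono hw r hr c'' c' (by omega) h2 hc1.1.2) hc1.2⟩
  have hmem := downset_mem_iff S hsub hdc hc
  rw [hS] at hmem
  rw [Finset.mem_filter] at hmem
  rw [card_filter_le_eq hz r hr s] at hmem
  constructor
  · intro h; exact (hmem.mp ⟨hc, h⟩)
  · intro h; exact (hmem.mpr h).2

lemma entries_le {lam mu : ℕ → ℕ} {T : ℕ → ℕ → ℕ} (hlat : LatticeProp lam mu T)
    (r : ℕ) (hr : 1 ≤ r) {c : ℕ} (hc : c ∈ Finset.Ioc (mu r) (lam r)) : T r c ≤ r := by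
  by_contra h
  have h0 : RowCount lam mu T (T r c) r = 0 := rc_zero_of_lt hlat hr (by omega)
  have : c ∈ (Finset.Ioc (mu r) (lam r)).filter (fun c' => T r c' = T r c) := by
    simp [Finset.mem_filter, hc]
  rw [RowCount] at h0
  have := Finset.card_pos.mpr ⟨c, this⟩
  omega

lemma cumT_top {lam mu : ℕ → ℕ} {T : ℕ → ℕ → ℕ} (hz : ZeroIffInner lam mu T)
    (hlat : LatticeProp lam mu T) {r : ℕ} (hr : 1 ≤ r) (hsubmu : mu r ≤ lam r)
    {s : ℕ} (hs : r ≤ s) : cumT lam mu T r s = lam r := by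
  have hfull : (Finset.Ioc (mu r) (lam r)).filter (fun c => T r c ≤ s)
      = Finset.Ioc (mu r) (lam r) := by
    apply Finset.filter_true_of_mem
    intro c hc
    exact le_trans (entries_le hlat r hr hc) hs
  have := card_filter_le_eq hz r hr s
  rw [hfull, Nat.card_Ioc] at this
  rw [cumT, ← this]
  omega

-- From column strictness to the right-leaning inequality on cumulative counts.
lemma cumT_right {lam mu : ℕ → ℕ} {T : ℕ → ℕ → ℕ}
    (hlam : IsPartitionFun lam) (hmu : IsPartitionFun mu)
    (hsubmu : ∀ r : ℕ, 1 ≤ r → mu r ≤ lam r)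
    (hz : ZeroIffInner lam mu T) (hw : RowWeak lam T) (hcs : ColStrict lam mu T)
    (hlat : LatticeProp lam mu T)
    {i j : ℕ} (hi : 1 ≤ i) (hij : i < j) :
    cumT lam mu T j i ≤ cumT lam mu T (j - 1) (i - 1) := by
  have hj1 : 1 ≤ j - 1 := by omega
  have hmuj : mu j ≤ mu (j - 1) := by
    have := hmu (j - 1) hj1
    rwa [Nat.sub_add_cancel (by omega)] at this
  have hlamj : lam j ≤ lam (j - 1) := by
    have := hlam (j - 1) hj1
    rwa [Nat.sub_add_cancel (by omega)] at this
  set m := cumT lam mu T j i with hm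
  rcases le_or_gt m (mu (j - 1)) with h | h
  · calc m ≤ mu (j - 1) := h
      _ = cumT lam mu T (j - 1) 0 := (cumT_zero lam mu T (j - 1)).symm
      _ ≤ cumT lam mu T (j - 1) (i - 1) := cumT_mono lam mu T (j - 1) (by omega)
  · -- m > mu (j-1) ≥ mu j, and m ≤ lam j
    have hmlam : m ≤ lam j := by
      calc m ≤ cumT lam mu T j j := cumT_mono lam mu T j (by omega)
        _ = lam j := cumT_top hz hlat (by omega) (hsubmu j (by omega)) le_rfl
    have hmIoc : m ∈ Finset.Ioc (mu j) (lam j) := by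
      rw [Finset.mem_Ioc]; omega
    have hTj : T j m ≤ i := by
      rw [memB hw hz j (by omega) i hmIoc]
    have hmIoc' : m ∈ Finset.Ioc (mu (j - 1)) (lam (j - 1)) := by
      rw [Finset.mem_Ioc]; omega
    have hTj1 : T (j - 1) m < T j m := by
      have := hcs (j - 1) m hj1 h (by rw [Nat.sub_add_cancel (by omega)]; omega)
      rwa [Nat.sub_add_cancel (by omega)] at this
    have : T (j - 1) m ≤ i - 1 := by omega
    rw [memB hw hz (j - 1) hj1 (i - 1) hmIoc'] at this
    exact this

-- tabToHive gradients
lemma tth_in {n : ℕ} {lam mu : ℕ → ℕ} {T : ℕ → ℕ → ℕ} {i j : ℕ} (h1 : i ≤ j) (h2 : j ≤ n) :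
    tabToHive n lam mu T i j =
      (∑ m ∈ Finset.Icc 1 j, (mu m : ℤ)) +
        ∑ s ∈ Finset.Icc 1 i, ∑ r ∈ Finset.Icc 1 j, (RowCount lam mu T s r : ℤ) := by
  rw [tabToHive, if_pos ⟨h1, h2⟩]

lemma tth_vert {n : ℕ} {lam mu : ℕ → ℕ} {T : ℕ → ℕ → ℕ} {i j : ℕ}
    (h0 : 1 ≤ i) (h1 : i ≤ j) (h2 : j ≤ n) :
    tabToHive n lam mu T i j - tabToHive n lam mu T (i - 1) j
      = ∑ r ∈ Finset.Icc 1 j, (RowCount lam mu T i r : ℤ) := by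
  rw [tth_in h1 h2, tth_in (by omega) h2]
  have := sum_Icc_sub_one (fun s => ∑ r ∈ Finset.Icc 1 j, (RowCount lam mu T s r : ℤ)) h0
  push_cast at this ⊢
  linarith [this]

lemma tth_hor {n : ℕ} {lam mu : ℕ → ℕ} {T : ℕ → ℕ → ℕ} {i j : ℕ}
    (h0 : 1 ≤ j) (h1 : i ≤ j - 1) (h2 : j ≤ n) :
    tabToHive n lam mu T i j - tabToHive n lam mu T i (j - 1)
      = (cumT lam mu T j i : ℤ) := by
  rw [tth_in (by omega) h2, tth_in h1 (by omega)]
  have hmu := sum_Icc_sub_one (fun m => (mu m : ℤ)) h0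
  have hD : (∑ s ∈ Finset.Icc 1 i, ∑ r ∈ Finset.Icc 1 j, (RowCount lam mu T s r : ℤ))
      - (∑ s ∈ Finset.Icc 1 i, ∑ r ∈ Finset.Icc 1 (j - 1), (RowCount lam mu T s r : ℤ))
      = ∑ s ∈ Finset.Icc 1 i, (RowCount lam mu T s j : ℤ) := by
    rw [← Finset.sum_sub_distrib]
    apply Finset.sum_congr rfl
    intro s _
    exact sum_Icc_sub_one (fun r => (RowCount lam mu T s r : ℤ)) h0
  rw [cumT]
  push_cast
  push_cast at hmu hD
  linarith [hmu, hD]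

lemma tth_grad {n : ℕ} {lam mu : ℕ → ℕ} {T : ℕ → ℕ → ℕ} {i j : ℕ}
    (h0 : 1 ≤ i) (h1 : i < j) (h2 : j ≤ n) :
    (tabToHive n lam mu T i j - tabToHive n lam mu T i (j - 1)) -
        (tabToHive n lam mu T (i - 1) j - tabToHive n lam mu T (i - 1) (j - 1)) =
      (RowCount lam mu T i j : ℤ) := by
  rw [tth_hor (by omega) (by omega) h2, tth_hor (by omega) (by omega) h2]
  have h3 : cumT lam mu T j i = RowCount lam mu T i j + cumT lam mu T j (i - 1) := by
    rw [cumT, cumT, sum_Icc_sub_one' (fun t => RowCount lam mu T t j) h0]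
    ring
  rw [h3]
  push_cast
  ring

lemma tth_hive {n : ℕ} {lam mu nu : ℕ → ℕ} {T : ℕ → ℕ → ℕ}
    (hlam : IsPartitionFun lam) (hmu : IsPartitionFun mu)
    (hsubmu : ∀ r : ℕ, 1 ≤ r → mu r ≤ lam r)
    (hT : TabCond n lam mu nu T) : HiveCond n lam mu nu (tabToHive n lam mu T) := by
  obtain ⟨hz, hout, hw, hcs, hlat, hwt⟩ := hT
  refine ⟨⟨?_, ?_, ?_, ?_⟩, ?_, ?_⟩
  · -- a 0 0 = 0
    simp [tabToHive]
  · -- rhombus inequalities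
    intro i j hi hij hjn
    refine ⟨?_, ?_, ?_⟩
    · -- upright
      have e := tth_grad (T := T) (lam := lam) (mu := mu) hi hij hjn
      have : (0 : ℤ) ≤ (RowCount lam mu T i j : ℤ) := Int.natCast_nonneg _
      linarith
    · -- right-leaning
      have e1 := tth_hor (T := T) (lam := lam) (mu := mu) (n := n) (i := i) (j := j)
        (by omega) (by omega) hjn
      have e2 := tth_hor (T := T) (lam := lam) (mu := mu) (n := n) (i := i - 1) (j := j - 1)
        (by omega) (by omega) (by omega)
      rw [(by omega : j - 1 - 1 = j - 2)] at e2
      have hle : cumT lam mu T j i ≤ cumT lam mu T (j - 1) (i - 1) :=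
        cumT_right hlam hmu hsubmu hz hw hcs hlat hi hij
      have hle' : (cumT lam mu T j i : ℤ) ≤ (cumT lam mu T (j - 1) (i - 1) : ℤ) :=
        Int.ofNat_le.mpr hle
      linarith
    · -- left-leaning
      have e1 := tth_vert (T := T) (lam := lam) (mu := mu) (n := n) (i := i + 1) (j := j)
        (by omega) (by omega) hjn
      rw [(by omega : i + 1 - 1 = i)] at e1
      have e2 := tth_vert (T := T) (lam := lam) (mu := mu) (n := n) (i := i) (j := j - 1)
        (by omega) (by omega) (by omega)
      have hle := hlat j (i + 1) (by omega) (by omega)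
      rw [(by omega : i + 1 - 1 = i)] at hle
      have hle' : (∑ r ∈ Finset.Icc 1 j, (RowCount lam mu T (i + 1) r : ℤ))
          ≤ ∑ r ∈ Finset.Icc 1 (j - 1), (RowCount lam mu T i r : ℤ) := by
        push_cast
        exact_mod_cast Nat.cast_le.mpr hle
      linarith
  · -- horizontal edges nonnegative
    intro i j hij hjn
    have e := tth_hor (T := T) (lam := lam) (mu := mu) (n := n) (i := i) (j := j)
      (by omega) (by omega) hjn
    have : (0 : ℤ) ≤ (cumT lam mu T j i : ℤ) := Int.natCast_nonneg _
    linarith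
  · -- left edges nonnegative
    intro i j hi hij hjn
    have e := tth_vert (T := T) (lam := lam) (mu := mu) (n := n) (i := i) (j := j) hi hij hjn
    have : (0 : ℤ) ≤ ∑ r ∈ Finset.Icc 1 j, (RowCount lam mu T i r : ℤ) :=
      Finset.sum_nonneg fun r _ => Int.natCast_nonneg _
    linarith
  · -- vanishing outside the triangle
    intro i j h
    simp only [tabToHive, if_neg h]
  · -- boundary labels
    intro k hk hkn
    refine ⟨?_, ?_, ?_⟩
    · -- lambda on the bottom
      have e1 := tth_vert (T := T) (lam := lam) (mu := mu) (n := n) (i := k) (j := k)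
        hk le_rfl hkn
      have e2 := tth_hor (T := T) (lam := lam) (mu := mu) (n := n) (i := k - 1) (j := k)
        hk (by omega) hkn
      have hS : ∑ r ∈ Finset.Icc 1 k, RowCount lam mu T k r = RowCount lam mu T k k := by
        rw [sum_Icc_sub_one' (fun r => RowCount lam mu T k r) hk,
          rc_sum_zero hlat k (k - 1) (by omega)]
        omega
      have e1' : tabToHive n lam mu T k k - tabToHive n lam mu T (k - 1) k
          = (RowCount lam mu T k k : ℤ) := by
        rw [e1, ← Nat.cast_sum, hS]
      have hnat : RowCount lam mu T k k + cumT lam mu T k (k - 1) = lam k := by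
        have htop : cumT lam mu T k k = lam k :=
          cumT_top hz hlat hk (hsubmu k hk) le_rfl
        have : cumT lam mu T k k = RowCount lam mu T k k + cumT lam mu T k (k - 1) := by
          rw [cumT, cumT, sum_Icc_sub_one' (fun t => RowCount lam mu T t k) hk]
          ring
        omega
      have hnat' : (RowCount lam mu T k k : ℤ) + (cumT lam mu T k (k - 1) : ℤ) = (lam k : ℤ) := by
        exact_mod_cast hnat
      linarith
    · -- mu on the left
      have e := tth_hor (T := T) (lam := lam) (mu := mu) (n := n) (i := 0) (j := k)
        hk (by omega) hkn
      rw [e, cumT_zero]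
    · -- nu on the right
      have e := tth_vert (T := T) (lam := lam) (mu := mu) (n := n) (i := k) (j := n)
        hk hkn le_rfl
      rw [e, ← Nat.cast_sum, ← hwt k hk]

lemma tab_inj {n : ℕ} {lam mu nu : ℕ → ℕ} {T T' : ℕ → ℕ → ℕ}
    (hsubmu : ∀ r : ℕ, 1 ≤ r → mu r ≤ lam r)
    (hsupp : ∀ r : ℕ, n < r → lam r = 0)
    (hT : TabCond n lam mu nu T) (hT' : TabCond n lam mu nu T')
    (heq : tabToHive n lam mu T = tabToHive n lam mu T') : T = T' := by
  obtain ⟨hz, hout, hw, hcs, hlat, hwt⟩ := hT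
  obtain ⟨hz', hout', hw', hcs', hlat', hwt'⟩ := hT'
  have hrc_lt : ∀ s r : ℕ, 1 ≤ s → s < r → r ≤ n →
      RowCount lam mu T s r = RowCount lam mu T' s r := by
    intro s r hs hsr hrn
    have e1 := tth_grad (T := T) (lam := lam) (mu := mu) (n := n) (i := s) (j := r) hs hsr hrn
    have e2 := tth_grad (T := T') (lam := lam) (mu := mu) (n := n) (i := s) (j := r) hs hsr hrn
    rw [heq] at e1
    rw [e1] at e2
    exact_mod_cast e2
  have hrc : ∀ s r : ℕ, 1 ≤ s → 1 ≤ r →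
      RowCount lam mu T s r = RowCount lam mu T' s r := by
    intro s r hs hr
    rcases Nat.lt_or_ge n r with hn | hn
    · rw [rc_zero_of_gt hsupp hn, rc_zero_of_gt hsupp hn]
    rcases Nat.lt_trichotomy s r with h | h | h
    · exact hrc_lt s r hs h hn
    · subst h
      have t1 : cumT lam mu T s s = lam s := cumT_top hz hlat hs (hsubmu s hs) le_rfl
      have t2 : cumT lam mu T' s s = lam s := cumT_top hz' hlat' hs (hsubmu s hs) le_rfl
      rw [cumT, sum_Icc_sub_one' (fun t => RowCount lam mu T t s) hs] at t1
      rw [cumT, sum_Icc_sub_one' (fun t => RowCount lam mu T' t s) hs] at t2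
      have hrest : ∑ t ∈ Finset.Icc 1 (s - 1), RowCount lam mu T t s
          = ∑ t ∈ Finset.Icc 1 (s - 1), RowCount lam mu T' t s := by
        apply Finset.sum_congr rfl
        intro t ht
        rw [Finset.mem_Icc] at ht
        exact hrc_lt t s ht.1 (by omega) hn
      omega
    · rw [rc_zero_of_lt hlat hr h, rc_zero_of_lt hlat' hr h]
  have hcum : ∀ r s : ℕ, 1 ≤ r → cumT lam mu T r s = cumT lam mu T' r s := by
    intro r s hr
    unfold cumT
    congr 1
    apply Finset.sum_congr rfl
    intro t ht
    rw [Finset.mem_Icc] at ht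
    exact hrc t r ht.1 hr
  funext r c
  by_cases h : 1 ≤ r ∧ 1 ≤ c ∧ c ≤ lam r
  · obtain ⟨hr, hc, hcl⟩ := h
    by_cases hin : c ≤ mu r
    · rw [(hz r c hr hc hcl).mpr hin, (hz' r c hr hc hcl).mpr hin]
    · have hIoc : c ∈ Finset.Ioc (mu r) (lam r) := by rw [Finset.mem_Ioc]; omega
      have d1 : c ≤ cumT lam mu T r (T r c) := (memB hw hz r hr _ hIoc).mp le_rfl
      have d2 : c ≤ cumT lam mu T' r (T' r c) := (memB hw' hz' r hr _ hIoc).mp le_rfl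
      rw [hcum r _ hr] at d1
      rw [← hcum r _ hr] at d2
      have g1 : T' r c ≤ T r c := (memB hw' hz' r hr _ hIoc).mpr d1
      have g2 : T r c ≤ T' r c := (memB hw hz r hr _ hIoc).mpr d2
      omega
  · rw [hout r c h, hout' r c h]

/-- Modified hive labels: `Ffun a s j = a (min s j) j`. -/
def Ffun (a : ℕ → ℕ → ℤ) (s j : ℕ) : ℤ := a (min s j) j

/-- Hive-side cumulative row positions. -/
def cumH (a : ℕ → ℕ → ℤ) (r s : ℕ) : ℤ := Ffun a s r - Ffun a s (r - 1)

/-- The tableau associated with a hive. -/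
noncomputable def hiveToTab (lam : ℕ → ℕ) (a : ℕ → ℕ → ℤ) : ℕ → ℕ → ℕ :=
  fun r c => if 1 ≤ r ∧ 1 ≤ c ∧ c ≤ lam r then sInf {s | (c : ℤ) ≤ cumH a r s} else 0

section HiveLemmas

variable {n : ℕ} {lam mu nu : ℕ → ℕ} {a : ℕ → ℕ → ℤ}

lemma cumH_zero (hA : HiveCond n lam mu nu a) {r : ℕ} (hr : 1 ≤ r) (hrn : r ≤ n) :
    cumH a r 0 = (mu r : ℤ) := by
  have := (hA.2.2 r hr hrn).2.1
  simp only [cumH, Ffun, Nat.min_eq_left (by omega : 0 ≤ r), Nat.min_eq_left (by omega : 0 ≤ r - 1)]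
  simpa using this

lemma cumH_top (hA : HiveCond n lam mu nu a) {r s : ℕ} (hr : 1 ≤ r) (hrn : r ≤ n)
    (hs : r ≤ s) : cumH a r s = (lam r : ℤ) := by
  have := (hA.2.2 r hr hrn).1
  simp only [cumH, Ffun, Nat.min_eq_right (by omega : r ≤ s),
    Nat.min_eq_right (by omega : r - 1 ≤ s)]
  exact this

lemma cumH_mono (hA : HiveCond n lam mu nu a) {r : ℕ} (hr : 1 ≤ r) (hrn : r ≤ n) :
    Monotone (cumH a r) := by
  apply monotone_nat_of_le_succ
  intro s
  rcases Nat.lt_trichotomy (s + 1) r with h | h | h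
  · have hu := (hA.1.2.1 (s + 1) r (by omega) h hrn).1
    simp only [Nat.add_sub_cancel] at hu
    simp only [cumH, Ffun, Nat.min_eq_left (by omega : s ≤ r), Nat.min_eq_left
      (by omega : s ≤ r - 1), Nat.min_eq_left (by omega : s + 1 ≤ r),
      Nat.min_eq_left (by omega : s + 1 ≤ r - 1)]
    linarith
  · have hv := hA.1.2.2.2 r r hr le_rfl hrn
    simp only [cumH, Ffun, Nat.min_eq_left (by omega : s ≤ r),
      Nat.min_eq_right (by omega : r - 1 ≤ s), Nat.min_eq_right (by omega : r ≤ s + 1),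
      Nat.min_eq_right (by omega : r - 1 ≤ s + 1)]
    have hs : s = r - 1 := by omega
    subst hs
    linarith
  · simp only [cumH, Ffun, Nat.min_eq_right (by omega : r ≤ s),
      Nat.min_eq_right (by omega : r - 1 ≤ s), Nat.min_eq_right (by omega : r ≤ s + 1),
      Nat.min_eq_right (by omega : r - 1 ≤ s + 1)]
    exact le_refl _

lemma cumH_lb (hA : HiveCond n lam mu nu a) {r s : ℕ} (hr : 1 ≤ r) (hrn : r ≤ n) :
    (mu r : ℤ) ≤ cumH a r s := by
  rw [← cumH_zero hA hr hrn]
  exact cumH_mono hA hr hrn (Nat.zero_le s)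

lemma cumH_ub (hA : HiveCond n lam mu nu a) {r s : ℕ} (hr : 1 ≤ r) (hrn : r ≤ n) :
    cumH a r s ≤ (lam r : ℤ) := by
  rw [← cumH_top hA hr hrn (le_max_right s r)]
  exact cumH_mono hA hr hrn (le_max_left s r)

lemma cumH_right (hA : HiveCond n lam mu nu a) (hlam : IsPartitionFun lam)
    {r s : ℕ} (hr : 2 ≤ r) (hrn : r ≤ n) (hs : 1 ≤ s) :
    cumH a r s ≤ cumH a (r - 1) (s - 1) := by
  rcases Nat.lt_or_ge s r with h | h
  · have hrr := (hA.1.2.1 s r hs h hrn).2.1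
    simp only [cumH, Ffun, Nat.min_eq_left (by omega : s ≤ r), Nat.min_eq_left
      (by omega : s ≤ r - 1), Nat.min_eq_left (by omega : s - 1 ≤ r - 1),
      Nat.min_eq_left (by omega : s - 1 ≤ r - 1 - 1)]
    rw [(by omega : r - 1 - 1 = r - 2)]
    linarith
  · rw [cumH_top hA (by omega) hrn h, cumH_top hA (by omega) (by omega) (by omega)]
    have := hlam (r - 1) (by omega)
    rw [Nat.sub_add_cancel (by omega)] at this
    exact_mod_cast this

lemma hiveToTab_le (hA : HiveCond n lam mu nu a) {r c : ℕ} (hr : 1 ≤ r) (hrn : r ≤ n)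
    (hc : 1 ≤ c) (hcl : c ≤ lam r) (s : ℕ) :
    hiveToTab lam a r c ≤ s ↔ (c : ℤ) ≤ cumH a r s := by
  have hne : {t | (c : ℤ) ≤ cumH a r t}.Nonempty :=
    ⟨r, by simp only [Set.mem_setOf_eq, cumH_top hA hr hrn le_rfl]; exact_mod_cast hcl⟩
  rw [hiveToTab]
  rw [if_pos ⟨hr, hc, hcl⟩]
  constructor
  · intro h
    have hmem : (c : ℤ) ≤ cumH a r (sInf {t | (c : ℤ) ≤ cumH a r t}) := Nat.sInf_mem hne
    exact le_trans hmem (cumH_mono hA hr hrn h)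
  · intro h
    exact Nat.sInf_le h

lemma hiveToTab_rc (hA : HiveCond n lam mu nu a) {r s : ℕ} (hr : 1 ≤ r) (hrn : r ≤ n)
    (hs : 1 ≤ s) :
    (RowCount lam mu (hiveToTab lam a) s r : ℤ) = cumH a r s - cumH a r (s - 1) := by
  have hP0 : (0 : ℤ) ≤ cumH a r (s - 1) := le_trans (by positivity) (cumH_lb hA hr hrn)
  have hPQ : cumH a r (s - 1) ≤ cumH a r s := cumH_mono hA hr hrn (by omega)
  have hQl : cumH a r s ≤ (lam r : ℤ) := cumH_ub hA hr hrn
  have hPm : (mu r : ℤ) ≤ cumH a r (s - 1) := cumH_lb hA hr hrn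
  have hfil : (Finset.Ioc (mu r) (lam r)).filter (fun c => hiveToTab lam a r c = s)
      = Finset.Ioc (cumH a r (s - 1)).toNat (cumH a r s).toNat := by
    ext c
    rw [Finset.mem_filter, Finset.mem_Ioc, Finset.mem_Ioc]
    constructor
    · rintro ⟨⟨h1, h2⟩, h3⟩
      have hle : hiveToTab lam a r c ≤ s := le_of_eq h3
      rw [hiveToTab_le hA hr hrn (by omega) h2] at hle
      have hgt : ¬ hiveToTab lam a r c ≤ s - 1 := by omega
      rw [hiveToTab_le hA hr hrn (by omega) h2] at hgt
      omega
    · rintro ⟨h1, h2⟩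
      have hc1 : mu r < c := by omega
      have hc2 : c ≤ lam r := by omega
      have hle : hiveToTab lam a r c ≤ s := by
        rw [hiveToTab_le hA hr hrn (by omega) hc2]; omega
      have hgt : ¬ hiveToTab lam a r c ≤ s - 1 := by
        rw [hiveToTab_le hA hr hrn (by omega) hc2]; omega
      refine ⟨⟨hc1, hc2⟩, by omega⟩
  rw [RowCount, hfil, Nat.card_Ioc]
  omega

end HiveLemmas

lemma Icc_one_eq_Ioc (m : ℕ) : Finset.Icc 1 m = Finset.Ioc 0 m := by
  ext x; simp [Finset.mem_Icc, Finset.mem_Ioc]; omega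

section HiveLemmas2

variable {n : ℕ} {lam mu nu : ℕ → ℕ} {a : ℕ → ℕ → ℤ}

lemma Ffun_zero (hA : HiveCond n lam mu nu a) (s : ℕ) : Ffun a s 0 = 0 := by
  simp only [Ffun, Nat.min_zero]
  exact hA.1.1

lemma hsumr (hA : HiveCond n lam mu nu a) {s m : ℕ} (hs : 1 ≤ s) (hm : m ≤ n) :
    ∑ r ∈ Finset.Icc 1 m, (RowCount lam mu (hiveToTab lam a) s r : ℤ)
      = Ffun a s m - Ffun a (s - 1) m := by
  have hcg : ∀ r ∈ Finset.Icc 1 m, (RowCount lam mu (hiveToTab lam a) s r : ℤ)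
      = (fun r => Ffun a s r - Ffun a (s - 1) r) r
        - (fun r => Ffun a s r - Ffun a (s - 1) r) (r - 1) := by
    intro r hr
    rw [Finset.mem_Icc] at hr
    rw [hiveToTab_rc hA hr.1 (le_trans hr.2 hm) hs]
    simp only [cumH]
    ring
  rw [Finset.sum_congr rfl hcg, telescope_sum (fun r => Ffun a s r - Ffun a (s - 1) r) m]
  rw [Ffun_zero hA, Ffun_zero hA]
  ring

lemma Ffun_ineq (hA : HiveCond n lam mu nu a) {s r : ℕ} (hs : 2 ≤ s) (hr : 1 ≤ r)
    (hrn : r ≤ n) :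
    Ffun a s r + Ffun a (s - 2) (r - 1) ≤ Ffun a (s - 1) r + Ffun a (s - 1) (r - 1) := by
  rcases le_or_gt s r with h | h
  · have hL := (hA.1.2.1 (s - 1) r (by omega) (by omega) hrn).2.2
    rw [(by omega : s - 1 - 1 = s - 2), (by omega : s - 1 + 1 = s)] at hL
    simp only [Ffun, Nat.min_eq_left (by omega : s ≤ r), Nat.min_eq_left
      (by omega : s - 2 ≤ r - 1), Nat.min_eq_left (by omega : s - 1 ≤ r),
      Nat.min_eq_left (by omega : s - 1 ≤ r - 1)]
    linarith
  · simp only [Ffun, Nat.min_eq_right (by omega : r ≤ s),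
      Nat.min_eq_right (by omega : r - 1 ≤ s - 2), Nat.min_eq_right (by omega : r ≤ s - 1),
      Nat.min_eq_right (by omega : r - 1 ≤ s - 1)]
    linarith

lemma hive_surj (hA : HiveCond n lam mu nu a)
    (hlam : IsPartitionFun lam) (hmu : IsPartitionFun mu)
    (hsubnu : ∀ r : ℕ, 1 ≤ r → nu r ≤ lam r)
    (hsupp : ∀ r : ℕ, n < r → lam r = 0) :
    TabCond n lam mu nu (hiveToTab lam a) ∧ tabToHive n lam mu (hiveToTab lam a) = a := by
  have hlamn : ∀ r : ℕ, 1 ≤ lam r → r ≤ n := by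
    intro r h
    by_contra hc
    have := hsupp r (by omega)
    omega
  have hzero : ZeroIffInner lam mu (hiveToTab lam a) := by
    intro r c hr hc hcl
    have hrn := hlamn r (by omega)
    have h0 : hiveToTab lam a r c = 0 ↔ hiveToTab lam a r c ≤ 0 := by omega
    rw [h0, hiveToTab_le hA hr hrn hc hcl 0, cumH_zero hA hr hrn]
    exact Nat.cast_le
  have houts : ∀ r c : ℕ, ¬(1 ≤ r ∧ 1 ≤ c ∧ c ≤ lam r) → hiveToTab lam a r c = 0 := by
    intro r c h
    rw [hiveToTab, if_neg h]
  have hrw : RowWeak lam (hiveToTab lam a) := by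
    intro r c hr hc hcl
    have hrn := hlamn r (by omega)
    have h1 : (((c : ℕ) + 1 : ℕ) : ℤ) ≤ cumH a r (hiveToTab lam a r (c + 1)) :=
      (hiveToTab_le hA hr hrn (by omega) (by omega) _).mp le_rfl
    rw [hiveToTab_le hA hr hrn hc (by omega)]
    have : (c : ℤ) ≤ ((c + 1 : ℕ) : ℤ) := by push_cast; omega
    linarith
  have hcs : ColStrict lam mu (hiveToTab lam a) := by
    intro r c hr hc hcl
    have hmur : mu (r + 1) ≤ mu r := hmu r hr
    have hc1 : 1 ≤ c := by omega
    have hr1n : r + 1 ≤ n := hlamn (r + 1) (by omega)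
    have hlr : lam (r + 1) ≤ lam r := hlam r hr
    have hs1 : ¬ hiveToTab lam a (r + 1) c ≤ 0 := by
      rw [hiveToTab_le hA (by omega) hr1n hc1 hcl 0, cumH_zero hA (by omega) hr1n]
      push_cast
      omega
    have hs2 : (c : ℤ) ≤ cumH a (r + 1) (hiveToTab lam a (r + 1) c) :=
      (hiveToTab_le hA (by omega) hr1n hc1 hcl _).mp le_rfl
    have hs3 := cumH_right hA hlam (r := r + 1) (s := hiveToTab lam a (r + 1) c)
      (by omega) hr1n (by omega)
    simp only [Nat.add_sub_cancel] at hs3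
    have hfin : hiveToTab lam a r c ≤ hiveToTab lam a (r + 1) c - 1 := by
      rw [hiveToTab_le hA hr (by omega) hc1 (by omega)]
      linarith
    omega
  have hlp : LatticeProp lam mu (hiveToTab lam a) := by
    have main : ∀ r s : ℕ, 1 ≤ r → r ≤ n → 2 ≤ s →
        ∑ r' ∈ Finset.Icc 1 r, RowCount lam mu (hiveToTab lam a) s r' ≤
          ∑ r' ∈ Finset.Icc 1 (r - 1), RowCount lam mu (hiveToTab lam a) (s - 1) r' := by
      intro r s hr hrn hs
      have e1 := hsumr hA (s := s) (m := r) (by omega) hrn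
      have e2 := hsumr hA (s := s - 1) (m := r - 1) (by omega) (by omega)
      rw [(by omega : s - 1 - 1 = s - 2)] at e2
      have hineq := Ffun_ineq hA hs hr hrn
      have hcast : ((∑ r' ∈ Finset.Icc 1 r, RowCount lam mu (hiveToTab lam a) s r' : ℕ) : ℤ)
          ≤ ((∑ r' ∈ Finset.Icc 1 (r - 1),
              RowCount lam mu (hiveToTab lam a) (s - 1) r' : ℕ) : ℤ) := by
        push_cast
        push_cast at e1 e2
        linarith
      exact_mod_cast hcast
    intro r s hr hs
    rcases le_or_gt r n with h | h
    · exact main r s hr h hs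
    · have hn0 : ∑ r' ∈ Finset.Icc 1 r, RowCount lam mu (hiveToTab lam a) s r'
          = ∑ r' ∈ Finset.Icc 1 n, RowCount lam mu (hiveToTab lam a) s r' := by
        rw [Icc_one_eq_Ioc r, ← Finset.sum_Ioc_consecutive _ (Nat.zero_le n) (le_of_lt h),
          ← Icc_one_eq_Ioc n]
        have : ∑ r' ∈ Finset.Ioc n r, RowCount lam mu (hiveToTab lam a) s r' = 0 := by
          apply Finset.sum_eq_zero
          intro x hx
          exact rc_zero_of_gt hsupp (Finset.mem_Ioc.mp hx).1
        omega
      rcases Nat.eq_zero_or_pos n with rfl | hn1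
      · rw [hn0]
        simp
      · rw [hn0]
        calc ∑ r' ∈ Finset.Icc 1 n, RowCount lam mu (hiveToTab lam a) s r'
            ≤ ∑ r' ∈ Finset.Icc 1 (n - 1), RowCount lam mu (hiveToTab lam a) (s - 1) r' :=
              main n s hn1 le_rfl hs
          _ ≤ ∑ r' ∈ Finset.Icc 1 (r - 1), RowCount lam mu (hiveToTab lam a) (s - 1) r' := by
              apply Finset.sum_le_sum_of_subset
              apply Finset.Icc_subset_Icc le_rfl
              omega
  have hwts : ∀ s : ℕ, 1 ≤ s →
      nu s = ∑ r ∈ Finset.Icc 1 n, RowCount lam mu (hiveToTab lam a) s r := by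
    intro s hs
    rcases le_or_gt s n with h | h
    · have e := hsumr hA (s := s) (m := n) hs le_rfl
      rw [Ffun, Ffun, Nat.min_eq_left h, Nat.min_eq_left (by omega : s - 1 ≤ n)] at e
      have hb := (hA.2.2 s hs h).2.2
      have : ((∑ r ∈ Finset.Icc 1 n, RowCount lam mu (hiveToTab lam a) s r : ℕ) : ℤ)
          = (nu s : ℤ) := by
        push_cast
        push_cast at e
        linarith
      exact_mod_cast this.symm
    · have h0 : nu s = 0 := by
        have h1 := hsubnu s hs
        have h2 := hsupp s h
        omega
      rw [h0]
      symm
      apply Finset.sum_eq_zero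
      intro r' hr'
      rw [Finset.mem_Icc] at hr'
      exact rc_zero_of_lt hlp hr'.1 (by omega)
  refine ⟨⟨hzero, houts, hrw, hcs, hlp, hwts⟩, ?_⟩
  funext i j
  by_cases h : i ≤ j ∧ j ≤ n
  · rw [tth_in h.1 h.2]
    have hmu0 : ∑ k ∈ Finset.Icc 1 j, (mu k : ℤ) = a 0 j := by
      have hcg : ∀ k ∈ Finset.Icc 1 j, (mu k : ℤ) = (fun k => a 0 k) k - (fun k => a 0 k) (k - 1) := by
        intro k hk
        rw [Finset.mem_Icc] at hk
        exact ((hA.2.2 k hk.1 (le_trans hk.2 h.2)).2.1).symm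
      rw [Finset.sum_congr rfl hcg, telescope_sum (fun k => a 0 k) j, hA.1.1, sub_zero]
    have hin : ∀ s ∈ Finset.Icc 1 i,
        (∑ r ∈ Finset.Icc 1 j, (RowCount lam mu (hiveToTab lam a) s r : ℤ))
          = (fun s => Ffun a s j) s - (fun s => Ffun a s j) (s - 1) := by
      intro s hs
      rw [Finset.mem_Icc] at hs
      exact hsumr hA hs.1 h.2
    rw [hmu0, Finset.sum_congr rfl hin, telescope_sum (fun s => Ffun a s j) i]
    simp only [Ffun, Nat.min_eq_left h.1, Nat.zero_min]
    ring
  · rw [tabToHive]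
    simp only [if_neg h]
    exact (hA.2.1 i j h).symm

end HiveLemmas2


/-- For partitions `lam, mu, nu` with at most `n` parts, `mu, nu ⊆ lam` and
`|lam| = |mu| + |nu|`, the map sending an LR tableau `T` of shape `lam/mu` and weight
`nu` to the LR `n`-hive whose upright gradients are `U_{ij} = #{entries i in row j}`
(and boundary labels `lam, mu, nu`) is a well-defined bijection; in particular the two
sets have the same cardinality. -/
theorem tableau_hive_bijection (n : ℕ) (lam mu nu : ℕ → ℕ)
    (hlam : IsPartitionFun lam) (hmu : IsPartitionFun mu) (hnu : IsPartitionFun nu)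
    (hsubmu : ∀ r : ℕ, 1 ≤ r → mu r ≤ lam r)
    (hsubnu : ∀ r : ℕ, 1 ≤ r → nu r ≤ lam r)
    (hsupp : ∀ r : ℕ, n < r → lam r = 0)
    (hsum : ∑ k ∈ Finset.Icc 1 n, lam k =
      (∑ k ∈ Finset.Icc 1 n, mu k) + ∑ k ∈ Finset.Icc 1 n, nu k) :
    (∀ T : ℕ → ℕ → ℕ, TabCond n lam mu nu T → ∀ i j : ℕ, 1 ≤ i → i < j → j ≤ n →
      (tabToHive n lam mu T i j - tabToHive n lam mu T i (j - 1)) -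
          (tabToHive n lam mu T (i - 1) j - tabToHive n lam mu T (i - 1) (j - 1)) =
        (RowCount lam mu T i j : ℤ)) ∧
    Set.BijOn (tabToHive n lam mu)
      {T : ℕ → ℕ → ℕ | TabCond n lam mu nu T}
      {a : ℕ → ℕ → ℤ | HiveCond n lam mu nu a} ∧
    Set.ncard {T : ℕ → ℕ → ℕ | TabCond n lam mu nu T} =
      Set.ncard {a : ℕ → ℕ → ℤ | HiveCond n lam mu nu a} := by
  have part1 : ∀ T : ℕ → ℕ → ℕ, TabCond n lam mu nu T → ∀ i j : ℕ, 1 ≤ i → i < j → j ≤ n →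
      (tabToHive n lam mu T i j - tabToHive n lam mu T i (j - 1)) -
          (tabToHive n lam mu T (i - 1) j - tabToHive n lam mu T (i - 1) (j - 1)) =
        (RowCount lam mu T i j : ℤ) :=
    fun T _ i j hi hij hjn => tth_grad hi hij hjn
  have hbij : Set.BijOn (tabToHive n lam mu)
      {T : ℕ → ℕ → ℕ | TabCond n lam mu nu T}
      {a : ℕ → ℕ → ℤ | HiveCond n lam mu nu a} := by
    refine ⟨?_, ?_, ?_⟩
    · intro T hT
      exact tth_hive hlam hmu hsubmu hT
    · intro T hT T' hT' heq
      exact tab_inj hsubmu hsupp hT hT' heq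
    · intro a ha
      obtain ⟨h1, h2⟩ := hive_surj ha hlam hmu hsubnu hsupp
      exact ⟨hiveToTab lam a, h1, h2⟩
  refine ⟨part1, hbij, ?_⟩
  rw [← hbij.image_eq, Set.ncard_image_of_injOn hbij.injOn]
end

section
/- Let T ∈ LR(λ/μ,ν) with ℓ(λ) = r, and consider the full r-deletion δ_r = δ_{r,1}···δ_{r,λ_r} applied to T (right to left along row r). If P and P' are the deletion paths of two consecutive type (ii) deletions δ_{r,j} and δ_{r,j−1} in this sequence (2 ≤ j ≤ λ_r − ν_r), with terminating row numbers t and t', then P' runs strictly to the left of P and t' ≥ t. Consequently, the sequence of nonzero terminating row numbers produced by δ_r, read in order of occurrence, is weakly increasing. -/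
lemma row_mono_aux {lam : ℕ → ℕ} {T : ℕ → ℕ → ℕ} (hrow : RowWeak lam T)
    (m : ℕ) (hm : 1 ≤ m) :
    ∀ a b : ℕ, 1 ≤ a → a ≤ b → b ≤ lam m → T m a ≤ T m b := by
  intro a b ha hab
  induction b, hab using Nat.le_induction with
  | base => intro _; exact le_rfl
  | succ n hn ih =>
    intro hb
    exact le_trans (ih (by omega)) (hrow m n hm (by omega) (by omega))

/-- Horizontal Path Comparison.  Let `T ∈ LR(lam/mu, nu)` with `ℓ(lam) = r` and let two
consecutive type (ii) deletions of the full `r`-deletion be performed: the first starts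
at the corner `(r, lam r)` with path `p` and terminating row `t`, and the second starts
at the corner `(r, lam r - 1)` of the resulting tableau with path `p'` and terminating
row `t'`.  Then `p'` runs strictly to the left of `p` and `t' ≥ t`. -/
theorem horizontal_path_comparison (lam mu : ℕ → ℕ) (T : ℕ → ℕ → ℕ)
    (r t t' : ℕ) (p p' : ℕ → ℕ)
    (hlam : IsPartitionFun lam) (hmu : IsPartitionFun mu)
    (hsub : ∀ k : ℕ, 1 ≤ k → mu k ≤ lam k)
    (hzero : ZeroIffInner lam mu T)
    (hrow : RowWeak lam T) (hcol : ColStrict lam mu T)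
    (hlat : LatticeProp lam mu T)
    (hr : 1 ≤ r) (hlen : 2 ≤ lam r) (hlen' : lam (r + 1) = 0)
    (hpos : 0 < T r (lam r)) (hlt : T r (lam r) < r)
    (ht : 1 ≤ t) (htr : t < r)
    (hpath : DeletionPath lam T r t p)
    (hpos' : 0 < DeleteResult T r t p r (lam r - 1))
    (hlt' : DeleteResult T r t p r (lam r - 1) < r)
    (ht' : 1 ≤ t') (ht'r : t' < r)
    (hpath' : DeletionPath (decAt lam r) (DeleteResult T r t p) r t' p') :
    t ≤ t' ∧ ∀ k : ℕ, t' ≤ k → k ≤ r → p' k < p k := by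

  obtain ⟨hp_r, hp_mid, hp_zero, hp_pos⟩ := hpath
  obtain ⟨hq_r, hq_mid, hq_zero, hq_pos⟩ := hpath'
  have hq_r' : p' r = lam r - 1 := by simpa [decAt] using hq_r
  have key : ∀ d k : ℕ, k + d = r → t ≤ k → t' ≤ k → p' k < p k := by
    intro d
    induction d with
    | zero =>
      intro k hk _ _
      have : k = r := by omega
      subst this
      omega
    | succ d ih =>
      intro k hk htk ht'k
      have hkr : k < r := by omega
      have ih' : p' (k + 1) < p (k + 1) := ih (k + 1) (by omega) (by omega) (by omega)
      obtain ⟨hq1, hq2, hq3, hq4⟩ := hq_mid k ht'k hkr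
      obtain ⟨hp1k, hp2k, hp3k, hp4k⟩ := hp_mid k htk hkr
      have hlamk : decAt lam r k = lam k := if_neg (by omega)
      have hp2 : p (k + 1) ≤ lam (k + 1) := by
        rcases Nat.lt_or_ge (k + 1) r with h1 | h1
        · exact (hp_mid (k + 1) (by omega) h1).2.1
        · have : k + 1 = r := by omega
          rw [this, hp_r]
      have hq1' : 1 ≤ p' (k + 1) := by
        rcases Nat.lt_or_ge (k + 1) r with h1 | h1
        · exact (hq_mid (k + 1) (by omega) h1).1
        · have : k + 1 = r := by omega
          rw [this, hq_r']; omega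
      have hv : DeleteResult T r t p (k + 1) (p' (k + 1)) = T (k + 1) (p' (k + 1)) := by
        simp only [DeleteResult]
        rw [if_neg]
        rintro ⟨-, -, hc⟩
        omega
      have hvle : T (k + 1) (p' (k + 1)) ≤ T (k + 1) (p (k + 1)) :=
        row_mono_aux hrow (k + 1) (by omega) _ _ hq1' (le_of_lt ih') hp2
      rw [hv] at hq3
      by_contra h
      push_neg at h
      rcases eq_or_lt_of_le h with heq | hgt
      · have : DeleteResult T r t p k (p' k) = T (k + 1) (p (k + 1)) := by
          simp only [DeleteResult]
          rw [if_pos ⟨htk, hkr, heq.symm⟩]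
        omega
      · have hle : p' k ≤ lam k := by rw [hlamk] at hq2; exact hq2
        have h1 : DeleteResult T r t p k (p' k) = T k (p' k) := by
          simp only [DeleteResult]
          rw [if_neg]
          rintro ⟨-, -, hc⟩
          omega
        have h2 : T (k + 1) (p (k + 1)) ≤ T k (p' k) := hp4k (p' k) hgt hle
        omega
  have htt' : t ≤ t' := by
    by_contra hcon
    push_neg at hcon
    have hpt : p' t < p t := key (r - t) t (by omega) le_rfl (by omega)
    obtain ⟨hq1, hq2, hq3, hq4⟩ := hq_mid t (by omega) htr
    obtain ⟨hp1, hp2, hp3, hp4⟩ := hp_mid t le_rfl htr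
    have hqpos : 0 < DeleteResult T r t p t (p' t) := hq_pos t hcon (by omega)
    have heq : DeleteResult T r t p t (p' t) = T t (p' t) := by
      simp only [DeleteResult]
      rw [if_neg]
      rintro ⟨-, -, hc⟩
      omega
    have hptmu : p t ≤ mu t := (hzero t (p t) ht hp1 hp2).mp hp_zero
    have hlamt : decAt lam r t = lam t := if_neg (by omega)
    have hq2' : p' t ≤ lam t := by rw [hlamt] at hq2; exact hq2
    have : T t (p' t) = 0 := (hzero t (p' t) ht hq1 hq2').mpr (by omega)
    omega
  refine ⟨htt', fun k hk hkr => key (r - k) k (by omega) (by omega) hk⟩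
end

section
/- Let a be an LR n-hive with λ_n > 0 such that U_{in} > 0 for some i < n, and let k = min{ j : U_{jn} > 0 }. Then the type (iv) path removal ψ_n — which decreases by 1 the bottom edge label λ_n, the right-boundary edge label ν_k, and the labels of all edges along the zig-zag path joining them through the upright rhombi of gradient 0 above level k in the n-th diagonal — yields an LR n-hive with boundary labels (λ − ε_n, μ, ν − ε_k), all of whose upright gradients equal those of a except that U_{kn} is decreased by 1. -/
/-- Upright rhombus gradient. -/
def Ugrad (a : ℕ → ℕ → ℤ) (i j : ℕ) : ℤ :=
  (a i j - a i (j - 1)) - (a (i - 1) j - a (i - 1) (j - 1))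

/-- The type (iv) path removal `ψ_n`: subtract `1` from the vertices `a i n` for
`k ≤ i ≤ n`, which decreases by `1` the edge labels along the zig-zag path in the
`n`-th diagonal joining the bottom edge `λ_n` to the right-boundary edge `ν_k`. -/
def psiRemove (n k : ℕ) (a : ℕ → ℕ → ℤ) : ℕ → ℕ → ℤ :=
  fun i j => if j = n ∧ k ≤ i then a i j - 1 else a i j

/-- Let `a` be an LR `n`-hive with `λ_n > 0` such that `U_{in} > 0` for some `i < n`, and
let `k = min{ j : U_{jn} > 0 }`.  Then the type (iv) path removal `ψ_n` yields an LR
`n`-hive with boundary labels `(λ - ε_n, μ, ν - ε_k)`, all of whose upright gradients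
equal those of `a` except that `U_{kn}` is decreased by `1`. -/
theorem psiRemove_spec (n k : ℕ) (a : ℕ → ℕ → ℤ) (h : IsLRHive n a)
    (hk : 1 ≤ k) (hkn : k < n)
    (hlam : 0 < a n n - a (n - 1) (n - 1))
    (hUk : 0 < Ugrad a k n)
    (hmin : ∀ j : ℕ, 1 ≤ j → j < k → Ugrad a j n = 0) :
    IsLRHive n (psiRemove n k a) ∧
    (∀ m : ℕ, 1 ≤ m → m ≤ n →
      psiRemove n k a 0 m - psiRemove n k a 0 (m - 1) = a 0 m - a 0 (m - 1)) ∧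
    (∀ m : ℕ, 1 ≤ m → m < n →
      psiRemove n k a m m - psiRemove n k a (m - 1) (m - 1) =
        a m m - a (m - 1) (m - 1)) ∧
    psiRemove n k a n n - psiRemove n k a (n - 1) (n - 1) =
      (a n n - a (n - 1) (n - 1)) - 1 ∧
    (∀ m : ℕ, 1 ≤ m → m ≤ n → m ≠ k →
      psiRemove n k a m n - psiRemove n k a (m - 1) n = a m n - a (m - 1) n) ∧
    psiRemove n k a k n - psiRemove n k a (k - 1) n = (a k n - a (k - 1) n) - 1 ∧
    (∀ i j : ℕ, 1 ≤ i → i < j → j ≤ n → ¬(i = k ∧ j = n) →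
      Ugrad (psiRemove n k a) i j = Ugrad a i j) ∧
    Ugrad (psiRemove n k a) k n = Ugrad a k n - 1 := by
  obtain ⟨h0, hrh, hA, hB⟩ := h
  have hn2 : 2 ≤ n := by omega
  have hne : ∀ i j : ℕ, j ≠ n → psiRemove n k a i j = a i j := by
    intro i j hj; simp [psiRemove, hj]
  have heq : ∀ i : ℕ, psiRemove n k a i n =
      if k ≤ i then a i n - 1 else a i n := by
    intro i; simp [psiRemove]
  have hne0 : ∀ j : ℕ, psiRemove n k a 0 j = a 0 j := by
    intro j; unfold psiRemove; rw [if_neg (by omega)]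
  have hUk' : a k (n - 1) + a (k - 1) n + 1 ≤ a k n + a (k - 1) (n - 1) := by
    have := hUk; simp only [Ugrad] at this; omega
  have halpha : ∀ i : ℕ, k ≤ i → i < n → a i (n - 1) + 1 ≤ a i n := by
    intro i hki hin
    induction i with
    | zero => omega
    | succ m ih =>
      rcases Nat.lt_or_ge m k with hm | hm
      · have hkm : k = m + 1 := by omega
        have hb := hA m n (by omega) le_rfl
        subst hkm
        have hmm : m + 1 - 1 = m := rfl
        rw [hmm] at hUk'
        omega
      · have h1 := ih hm (by omega)
        have h2 := (hrh (m + 1) n (by omega) (by omega) le_rfl).1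
        have hmm : m + 1 - 1 = m := rfl
        rw [hmm] at h2
        omega
  have hbeta : a (k - 1) n + 1 ≤ a k n := by
    have := hB k (n - 1) hk (by omega) (by omega)
    omega
  refine ⟨⟨?_, ?_, ?_, ?_⟩, ?_, ?_, ?_, ?_, ?_, ?_, ?_⟩
  · rw [hne0, h0]
  · intro i j h1 h2 h3
    rcases eq_or_lt_of_le h3 with hj | hj
    · subst hj
      obtain ⟨HU, HR, HL⟩ := hrh i j h1 h2 le_rfl
      rw [hne i (j - 1) (by omega), hne (i - 1) (j - 1) (by omega),
        hne (i - 1) (j - 2) (by omega), heq i, heq (i - 1), heq (i + 1)]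
      refine ⟨?_, ?_, ?_⟩ <;> split_ifs <;>
        first
        | omega
        | (rw [show i = k by omega]; omega)
    · obtain ⟨HU, HR, HL⟩ := hrh i j h1 h2 h3
      rw [hne i (j - 1) (by omega), hne (i - 1) j (by omega), hne i j (by omega),
        hne (i - 1) (j - 1) (by omega), hne (i - 1) (j - 2) (by omega),
        hne (i + 1) j (by omega)]
      exact ⟨HU, HR, HL⟩
  · intro i j hij hjn
    rcases eq_or_lt_of_le hjn with hj | hj
    · subst hj
      rw [hne i (j - 1) (by omega), heq i]
      split_ifs with hki
      · have := halpha i hki hij; omega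
      · exact hA i j hij le_rfl
    · rw [hne i (j - 1) (by omega), hne i j (by omega)]
      exact hA i j hij (le_of_lt hj)
  · intro i j h1 h2 h3
    rcases eq_or_lt_of_le h3 with hj | hj
    · subst hj
      rw [heq i, heq (i - 1)]
      have hb := hB i j h1 (by omega) le_rfl
      split_ifs with ha hc
      · omega
      · omega
      · have hik : i = k := by omega
        subst hik; omega
      · omega
    · rw [hne (i - 1) j (by omega), hne i j (by omega)]
      exact hB i j h1 h2 (le_of_lt hj)
  · intro m h1 h2; rw [hne0, hne0]
  · intro m h1 h2
    rw [hne m m (by omega), hne (m - 1) (m - 1) (by omega)]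
  · rw [heq n, hne (n - 1) (n - 1) (by omega), if_pos (by omega)]; ring
  · intro m h1 h2 h3
    rw [heq m, heq (m - 1)]
    split_ifs <;> omega
  · rw [heq k, heq (k - 1), if_pos le_rfl, if_neg (by omega)]; ring
  · intro i j h1 h2 h3 h4
    simp only [Ugrad]
    rcases eq_or_lt_of_le h3 with hj | hj
    · subst hj
      have hik : i ≠ k := fun hc => h4 ⟨hc, rfl⟩
      rw [heq i, heq (i - 1), hne i (j - 1) (by omega),
        hne (i - 1) (j - 1) (by omega)]
      split_ifs <;> omega
    · rw [hne i j (by omega), hne (i - 1) j (by omega),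
        hne i (j - 1) (by omega), hne (i - 1) (j - 1) (by omega)]
  · simp only [Ugrad]
    rw [heq k, heq (k - 1), hne k (n - 1) (by omega),
      hne (k - 1) (n - 1) (by omega), if_pos le_rfl, if_neg (by omega)]
    ring
end
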